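/- arXiv:1711.09610 — 3 statements merged into one kernel-verified Lean document; each statement's English description precedes it below -/
import Mathlib

section
/- Let G be a totally disconnected locally compact group, α a continuous endomorphism of G, and U⁽¹⁾, U⁽²⁾ two compact open subgroups of G, each tidy for α. Then [U⁽¹⁾ : U⁽¹⁾ ∩ α⁻¹(U⁽¹⁾)] = [U⁽²⁾ : U⁽²⁾ ∩ α⁻¹(U⁽²⁾)]. -/
open Pointwise Subgroup Filter

variable {G : Type*}

/-- The `n`-fold iterate of an endomorphism `α : G →* G`, as a monoid homomorphism. -/
def iterHom [Group G] (α : G →* G) : ℕ → G →* G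
  | 0 => MonoidHom.id G
  | n + 1 => α.comp (iterHom α n)

/-- The descending sequence `U_0 = U`, `U_{n+1} = U ⊓ α(U_n)`. -/
def seqU [Group G] (α : G →* G) (U : Subgroup G) : ℕ → Subgroup G
  | 0 => U
  | n + 1 => U ⊓ Subgroup.map α (seqU α U n)

/-- `U₊ = ⋂ₙ Uₙ`. -/
def Uplus [Group G] (α : G →* G) (U : Subgroup G) : Subgroup G := ⨅ n, seqU α U n

/-- `U₋ = ⋂ₙ α^{-n}(U)`. -/
def Uminus [Group G] (α : G →* G) (U : Subgroup G) : Subgroup G :=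
  ⨅ n, Subgroup.comap (iterHom α n) U

/-- `U₊₊ = ⋃ₙ αⁿ(U₊)` as a subset of `G`. -/
def Upp [Group G] (α : G →* G) (U : Subgroup G) : Set G :=
  ⋃ n, iterHom α n '' (Uplus α U : Set G)

/-- `U₋₋ = ⋃ₙ α^{-n}(U₋)` as a subset of `G`. -/
def Umm [Group G] (α : G →* G) (U : Subgroup G) : Set G :=
  ⋃ n, iterHom α n ⁻¹' (Uminus α U : Set G)

/-- `U₋ₙ = ⋂_{k=0}^{n} α^{-k}(U)`. -/
def Uneg [Group G] (α : G →* G) (U : Subgroup G) (n : ℕ) : Subgroup G :=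
  ⨅ k ∈ Finset.range (n + 1), Subgroup.comap (iterHom α k) U

/-- `U` is tidy above for `α` if `U = U₊U₋`. -/
def TidyAbove [Group G] (α : G →* G) (U : Subgroup G) : Prop :=
  (U : Set G) = (Uplus α U : Set G) * (Uminus α U : Set G)

/-- `U` is tidy below for `α` if `U₋₋` is closed. -/
def TidyBelow [Group G] [TopologicalSpace G] (α : G →* G) (U : Subgroup G) : Prop :=
  IsClosed (Umm α U)

/-- `U` is tidy for `α` if it is tidy above and tidy below for `α`. -/
def Tidy [Group G] [TopologicalSpace G] (α : G →* G) (U : Subgroup G) : Prop :=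
  TidyAbove α U ∧ TidyBelow α U

/-- The scale of `α`: the minimum of `[α(V) : α(V) ∩ V]` over compact open subgroups `V`. -/
noncomputable def scale [Group G] [TopologicalSpace G] (α : G →* G) : ℕ :=
  sInf {n : ℕ | ∃ V : Subgroup G, IsCompact (V : Set G) ∧ IsOpen (V : Set G) ∧
    n = Subgroup.relIndex V (Subgroup.map α V)}

set_option linter.unusedSectionVars false

section Alg
variable [Group G] (α : G →* G) (U : Subgroup G)

lemma iterHom_zero : iterHom α 0 = MonoidHom.id G := rfl
lemma iterHom_succ (n : ℕ) : iterHom α (n + 1) = α.comp (iterHom α n) := rfl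

lemma iterHom_one : iterHom α 1 = α := by
  rw [iterHom_succ, iterHom_zero, MonoidHom.comp_id]

lemma iterHom_succ' (n : ℕ) : iterHom α (n + 1) = (iterHom α n).comp α := by
  induction n with
  | zero => rw [iterHom_one, iterHom_zero, MonoidHom.id_comp]
  | succ n ih =>
      have : iterHom α (n+1+1) = α.comp (iterHom α (n+1)) := rfl
      rw [this, ih, ← MonoidHom.comp_assoc, ← iterHom_succ, ih]

lemma iterHom_add (m n : ℕ) : iterHom α (m + n) = (iterHom α m).comp (iterHom α n) := by
  induction n with
  | zero => rw [Nat.add_zero, iterHom_zero, MonoidHom.comp_id]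
  | succ n ih =>
      rw [← Nat.add_assoc, iterHom_succ', ih, iterHom_succ' α n, MonoidHom.comp_assoc]

lemma seqU_zero : seqU α U 0 = U := rfl
lemma seqU_succ (n : ℕ) : seqU α U (n + 1) = U ⊓ Subgroup.map α (seqU α U n) := rfl

lemma seqU_le (n : ℕ) : seqU α U n ≤ U := by
  cases n with
  | zero => exact le_rfl
  | succ n => exact inf_le_left

lemma seqU_antitone_succ (n : ℕ) : seqU α U (n + 1) ≤ seqU α U n := by
  induction n with
  | zero => exact inf_le_left
  | succ n ih => exact le_inf inf_le_left (le_trans inf_le_right (Subgroup.map_mono ih))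

lemma seqU_antitone : Antitone (seqU α U) := antitone_nat_of_succ_le (seqU_antitone_succ α U)

lemma Uplus_le (n : ℕ) : Uplus α U ≤ seqU α U n := iInf_le _ n
lemma Uplus_le_base : Uplus α U ≤ U := Uplus_le α U 0

lemma mem_Uplus {x : G} : x ∈ Uplus α U ↔ ∀ n, x ∈ seqU α U n := Subgroup.mem_iInf

lemma Uminus_le (n : ℕ) : Uminus α U ≤ Subgroup.comap (iterHom α n) U := iInf_le _ n

lemma mem_Uminus {x : G} : x ∈ Uminus α U ↔ ∀ n, iterHom α n x ∈ U := by
  simp [Uminus, Subgroup.mem_iInf, Subgroup.mem_comap]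

lemma Uminus_le_base : Uminus α U ≤ U := fun x hx => by
  simpa [iterHom_zero] using (mem_Uminus α U).mp hx 0

lemma map_mem_Uminus {x : G} (hx : x ∈ Uminus α U) : α x ∈ Uminus α U := by
  rw [mem_Uminus] at hx ⊢
  intro n
  have := hx (n + 1)
  rwa [iterHom_succ'] at this

lemma iter_mem_Uminus {x : G} (hx : x ∈ Uminus α U) (n : ℕ) : iterHom α n x ∈ Uminus α U := by
  induction n with
  | zero => exact hx
  | succ n ih => rw [iterHom_succ]; exact map_mem_Uminus α U ih

lemma mem_Umm {x : G} : x ∈ Umm α U ↔ ∃ n, iterHom α n x ∈ Uminus α U := by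
  simp [Umm]

lemma mem_Umm_of_mem_Uminus {x : G} (hx : x ∈ Uminus α U) : x ∈ Umm α U :=
  (mem_Umm α U).mpr ⟨0, hx⟩

lemma mem_Umm_mono {x : G} {m n : ℕ} (h : m ≤ n) (hx : iterHom α m x ∈ Uminus α U) :
    iterHom α n x ∈ Uminus α U := by
  obtain ⟨k, rfl⟩ := Nat.exists_eq_add_of_le h
  rw [Nat.add_comm, iterHom_add]
  exact iter_mem_Uminus α U hx k

lemma Umm_one : (1 : G) ∈ Umm α U := (mem_Umm α U).mpr ⟨0, by simp [mem_Uminus, one_mem]⟩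

lemma Umm_mul {x y : G} (hx : x ∈ Umm α U) (hy : y ∈ Umm α U) : x * y ∈ Umm α U := by
  obtain ⟨m, hm⟩ := (mem_Umm α U).mp hx
  obtain ⟨n, hn⟩ := (mem_Umm α U).mp hy
  refine (mem_Umm α U).mpr ⟨max m n, ?_⟩
  rw [map_mul]
  exact mul_mem (mem_Umm_mono α U (le_max_left m n) hm) (mem_Umm_mono α U (le_max_right m n) hn)

lemma Umm_inv {x : G} (hx : x ∈ Umm α U) : x⁻¹ ∈ Umm α U := by
  obtain ⟨m, hm⟩ := (mem_Umm α U).mp hx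
  exact (mem_Umm α U).mpr ⟨m, by rw [map_inv]; exact inv_mem hm⟩

lemma mem_Umm_of_iter {x : G} {n : ℕ} (hx : iterHom α n x ∈ Umm α U) : x ∈ Umm α U := by
  obtain ⟨m, hm⟩ := (mem_Umm α U).mp hx
  rw [← MonoidHom.comp_apply, ← iterHom_add] at hm
  exact (mem_Umm α U).mpr ⟨m + n, hm⟩

/-- If all iterates of `d` up to `r` lie in `U` then `α^r d ∈ U_r`. -/
lemma iter_mem_seqU {d : G} (hd : ∀ i, iterHom α i d ∈ U) (r : ℕ) :
    iterHom α r d ∈ seqU α U r := by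
  induction r with
  | zero => exact hd 0
  | succ r ih =>
      rw [seqU_succ]
      refine ⟨hd (r + 1), ?_⟩
      rw [iterHom_succ, MonoidHom.comp_apply]
      exact Subgroup.mem_map.mpr ⟨iterHom α r d, ih, rfl⟩

lemma le_map_iter_of_le_map (h : Uplus α U ≤ Subgroup.map α (Uplus α U)) (n : ℕ) :
    Uplus α U ≤ Subgroup.map (iterHom α n) (Uplus α U) := by
  induction n with
  | zero => intro x hx; exact ⟨x, hx, rfl⟩
  | succ n ih =>
      calc Uplus α U ≤ Subgroup.map α (Uplus α U) := h
      _ ≤ Subgroup.map α (Subgroup.map (iterHom α n) (Uplus α U)) := Subgroup.map_mono ih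
      _ = Subgroup.map (iterHom α (n+1)) (Uplus α U) := by
            rw [Subgroup.map_map, ← iterHom_succ]

end Alg

section Top
variable [Group G] [TopologicalSpace G] [IsTopologicalGroup G] [TotallyDisconnectedSpace G]

lemma myT1 : T1Space G := by
  constructor
  intro x
  have : connectedComponent x = {x} :=
    totallyDisconnectedSpace_iff_connectedComponent_singleton.mp ‹_› x
  rw [← this]; exact isClosed_connectedComponent

lemma myT2 : T2Space G := by
  have := myT1 (G := G)
  infer_instance

lemma continuous_iterHom {α : G →* G} (hα : Continuous α) (n : ℕ) :
    Continuous (iterHom α n) := by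
  induction n with
  | zero => exact continuous_id
  | succ n ih => exact hα.comp ih

variable {α : G →* G} {U : Subgroup G}

lemma isClosed_coe (hUo : IsOpen (U : Set G)) : IsClosed (U : Set G) :=
  Subgroup.isClosed_of_isOpen U hUo

lemma isCompact_seqU (hα : Continuous α) (hUc : IsCompact (U : Set G)) (n : ℕ) :
    IsCompact ((seqU α U n : Subgroup G) : Set G) := by
  induction n with
  | zero => exact hUc
  | succ n ih =>
      have h2 : IsClosed ((Subgroup.map α (seqU α U n) : Subgroup G) : Set G) := by
        have := myT2 (G := G)
        have hc : IsCompact ((Subgroup.map α (seqU α U n) : Subgroup G) : Set G) := by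
          rw [Subgroup.coe_map]; exact ih.image hα
        exact hc.isClosed
      rw [seqU_succ, Subgroup.coe_inf]
      exact hUc.inter_right h2

lemma isClosed_seqU (hα : Continuous α) (hUc : IsCompact (U : Set G)) (n : ℕ) :
    IsClosed ((seqU α U n : Subgroup G) : Set G) := by
  have := myT2 (G := G)
  exact (isCompact_seqU hα hUc n).isClosed

lemma coe_Uplus : ((Uplus α U : Subgroup G) : Set G)
    = ⋂ n, ((seqU α U n : Subgroup G) : Set G) :=
  Subgroup.coe_iInf

lemma isCompact_Uplus (hα : Continuous α) (hUc : IsCompact (U : Set G)) :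
    IsCompact ((Uplus α U : Subgroup G) : Set G) := by
  have := myT2 (G := G)
  refine IsCompact.of_isClosed_subset hUc ?_ ?_
  · rw [coe_Uplus]; exact isClosed_iInter fun n => isClosed_seqU hα hUc n
  · exact Uplus_le_base α U

lemma coe_Uminus : ((Uminus α U : Subgroup G) : Set G)
    = ⋂ n, iterHom α n ⁻¹' (U : Set G) := by
  rw [Uminus, Subgroup.coe_iInf]
  simp [Subgroup.coe_comap]

lemma isClosed_Uminus (hα : Continuous α) (hUo : IsOpen (U : Set G)) :
    IsClosed ((Uminus α U : Subgroup G) : Set G) := by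
  rw [coe_Uminus]
  exact isClosed_iInter fun n => (isClosed_coe hUo).preimage (continuous_iterHom hα n)

/-- The key compactness fact: `U₊ ⊆ α(U₊)`. -/
lemma Uplus_le_map (hα : Continuous α) (hUc : IsCompact (U : Set G)) :
    Uplus α U ≤ Subgroup.map α (Uplus α U) := by
  have ht2 := myT2 (G := G)
  intro x hx
  have hne : (⋂ n, ((seqU α U n : Subgroup G) : Set G) ∩ α ⁻¹' {x}).Nonempty := by
    apply IsCompact.nonempty_iInter_of_sequence_nonempty_isCompact_isClosed
    · intro n
      exact Set.inter_subset_inter_left _ (seqU_antitone_succ α U n)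
    · intro n
      have hx' : x ∈ seqU α U (n + 1) := (mem_Uplus α U).mp hx (n + 1)
      rw [seqU_succ] at hx'
      obtain ⟨y, hy, hyx⟩ := Subgroup.mem_map.mp hx'.2
      exact ⟨y, hy, by simp [hyx]⟩
    · exact (isCompact_seqU hα hUc 0).inter_right (isClosed_singleton.preimage hα)
    · intro n
      exact (isClosed_seqU hα hUc n).inter (isClosed_singleton.preimage hα)
  obtain ⟨y, hy⟩ := hne
  have hyP : y ∈ Uplus α U := by
    rw [mem_Uplus]
    intro n
    exact ((Set.mem_iInter.mp hy n).1 : _)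
  have hyx : α y = x := (Set.mem_iInter.mp hy 0).2
  exact ⟨y, hyP, hyx⟩

end Top

section Core
variable [Group G] [TopologicalSpace G] [IsTopologicalGroup G] [TotallyDisconnectedSpace G]
variable {α : G →* G} {U : Subgroup G}

/-- Baire category step: a uniform bound on `U₊ ∩ U₋₋`. -/
lemma exists_uniform_bound (hα : Continuous α) (hUc : IsCompact (U : Set G))
    (hUo : IsOpen (U : Set G)) (hUb : TidyBelow α U) :
    ∃ N, ∀ x ∈ ((Uplus α U : Subgroup G) : Set G) ∩ Umm α U,
      iterHom α N x ∈ Uminus α U := by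
  have ht2 := myT2 (G := G)
  set J : Set G := ((Uplus α U : Subgroup G) : Set G) ∩ Umm α U with hJ
  have hJmul : ∀ x ∈ J, ∀ y ∈ J, x * y ∈ J := by
    rintro x ⟨hx1, hx2⟩ y ⟨hy1, hy2⟩
    exact ⟨mul_mem hx1 hy1, Umm_mul α U hx2 hy2⟩
  have hJinv : ∀ x ∈ J, x⁻¹ ∈ J := by
    rintro x ⟨hx1, hx2⟩
    exact ⟨inv_mem hx1, Umm_inv α U hx2⟩
  have hJc : IsCompact J := (isCompact_Uplus hα hUc).inter_right hUb
  rcases J.eq_empty_or_nonempty with hJe | hJne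
  · exact ⟨0, by rw [hJe]; simp⟩
  haveI : CompactSpace ↥J := isCompact_iff_compactSpace.mp hJc
  haveI : Nonempty ↥J := hJne.to_subtype
  -- Baire category on the compact Hausdorff space J
  have hclosed : ∀ n : ℕ, IsClosed (Subtype.val ⁻¹' (iterHom α n ⁻¹' ((Uminus α U : Subgroup G) : Set G)) : Set ↥J) :=
    fun n => (((isClosed_Uminus hα hUo).preimage (continuous_iterHom hα n)).preimage
      continuous_subtype_val)
  have huniv : (⋃ n : ℕ, Subtype.val ⁻¹' (iterHom α n ⁻¹' ((Uminus α U : Subgroup G) : Set G)) : Set ↥J) = Set.univ := by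
    ext z
    simp only [Set.mem_iUnion, Set.mem_preimage, Set.mem_univ, iff_true]
    exact (mem_Umm α U).mp z.2.2
  obtain ⟨N, x₀, hx₀⟩ := nonempty_interior_of_iUnion_of_closed hclosed huniv
  obtain ⟨t, htsub, hto, hx₀t⟩ := mem_interior.mp hx₀
  obtain ⟨O, hO, rfl⟩ := isOpen_induced_iff.mp hto
  set x : G := (x₀ : G) with hxdef
  have hxJ : x ∈ J := x₀.2
  have hxO : x ∈ O := hx₀t
  have hkey : ∀ z ∈ J ∩ O, iterHom α N z ∈ Uminus α U := by
    rintro z ⟨hzJ, hzO⟩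
    exact htsub (show (⟨z, hzJ⟩ : ↥J) ∈ Subtype.val ⁻¹' O from hzO)
  -- covering argument
  have hmem : ∀ z : ↥J, ∃ k, iterHom α k ((z : G) * x⁻¹) ∈ Uminus α U := by
    intro z
    have : (z : G) * x⁻¹ ∈ J := hJmul _ z.2 _ (hJinv _ hxJ)
    exact (mem_Umm α U).mp this.2
  choose k hk using hmem
  have hcover : J ⊆ ⋃ z : ↥J, (fun g => ((z : G) * x⁻¹) * g) '' O := by
    intro z hz
    refine Set.mem_iUnion.mpr ⟨⟨z, hz⟩, x, hxO, ?_⟩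
    simp
  obtain ⟨s, hs⟩ := hJc.elim_finite_subcover _
    (fun z : ↥J => (Homeomorph.mulLeft ((z : G) * x⁻¹)).isOpen_image.mpr hO) hcover
  refine ⟨s.sup (fun z => max (k z) N), ?_⟩
  intro y hyJ
  obtain ⟨z, hzs, o, hoO, hoy⟩ := by
    have := hs hyJ
    simp only [Set.mem_iUnion, Set.mem_image, exists_prop, Homeomorph.coe_mulLeft] at this
    exact this
  have hzxJ : (z : G) * x⁻¹ ∈ J := hJmul _ z.2 _ (hJinv _ hxJ)
  have hoJ : o ∈ J := by
    have ho : o = ((z : G) * x⁻¹)⁻¹ * y := by rw [← hoy]; group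
    rw [ho]
    exact hJmul _ (hJinv _ hzxJ) _ hyJ
  have h1 : iterHom α (s.sup (fun z => max (k z) N)) ((z : G) * x⁻¹) ∈ Uminus α U :=
    mem_Umm_mono α U (le_trans (le_max_left _ N)
      (Finset.le_sup (f := fun z => max (k z) N) hzs)) (hk z)
  have h2 : iterHom α (s.sup (fun z => max (k z) N)) o ∈ Uminus α U :=
    mem_Umm_mono α U (le_trans (le_max_right (k z) _)
      (Finset.le_sup (f := fun z => max (k z) N) hzs))
      (hkey o ⟨hoJ, hoO⟩)
  have hy : y = ((z : G) * x⁻¹) * o := hoy.symm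
  rw [hy, map_mul]
  exact mul_mem h1 h2

/-- `U₊ ∩ U₋₋ ⊆ U₋`. -/
lemma mem_Uminus_of_mem_Uplus_Umm (hα : Continuous α) (hUc : IsCompact (U : Set G))
    (hUo : IsOpen (U : Set G)) (hUb : TidyBelow α U) :
    ∀ x, x ∈ Uplus α U → x ∈ Umm α U → x ∈ Uminus α U := by
  obtain ⟨N, hN⟩ := exists_uniform_bound hα hUc hUo hUb
  intro a haP haM
  obtain ⟨a', ha'P, ha'⟩ := le_map_iter_of_le_map α U (Uplus_le_map hα hUc) N haP
  have ha'M : a' ∈ Umm α U := mem_Umm_of_iter α U (by rw [ha']; exact haM)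
  have := hN a' ⟨ha'P, ha'M⟩
  rwa [ha'] at this

/-- `αⁿ(U₊) ∩ U₋₋ ⊆ U₊ ∩ U₋`. -/
lemma mem_of_map_iter_Uplus_Umm (hα : Continuous α) (hUc : IsCompact (U : Set G))
    (hUo : IsOpen (U : Set G)) (hUb : TidyBelow α U) (n : ℕ) {y : G}
    (hy : y ∈ Subgroup.map (iterHom α n) (Uplus α U)) (hyM : y ∈ Umm α U) :
    y ∈ Uplus α U ∧ y ∈ Uminus α U := by
  obtain ⟨u, huP, rfl⟩ := hy
  have huM : u ∈ Umm α U := mem_Umm_of_iter α U hyM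
  have huMin : u ∈ Uminus α U := mem_Uminus_of_mem_Uplus_Umm hα hUc hUo hUb u huP huM
  constructor
  · rw [mem_Uplus]
    intro r
    obtain ⟨w, hwP, hwu⟩ := le_map_iter_of_le_map α U (Uplus_le_map hα hUc) r huP
    have hwMin : w ∈ Uminus α U :=
      mem_Uminus_of_mem_Uplus_Umm hα hUc hUo hUb w hwP
        (mem_Umm_of_iter α U (by rw [hwu]; exact mem_Umm_of_mem_Uminus α U huMin))
    have hall : ∀ i, iterHom α i w ∈ U := fun i =>
      Uminus_le_base α U (iter_mem_Uminus α U hwMin i)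
    have hseq : iterHom α (n + r) w ∈ seqU α U (n + r) := iter_mem_seqU α U hall (n + r)
    have heq : iterHom α (n + r) w = iterHom α n u := by
      rw [iterHom_add, MonoidHom.comp_apply, hwu]
    rw [heq] at hseq
    exact seqU_antitone α U (Nat.le_add_left r n) hseq
  · exact iter_mem_Uminus α U huMin n

/-- Tidy implies `U ⊓ αⁿ(U₊) = U₊`. -/
lemma inf_map_iter_Uplus (hα : Continuous α) (hUc : IsCompact (U : Set G))
    (hUo : IsOpen (U : Set G)) (hU : Tidy α U) (n : ℕ) :
    U ⊓ Subgroup.map (iterHom α n) (Uplus α U) = Uplus α U := by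
  apply le_antisymm
  · intro x hx
    rw [Subgroup.mem_inf] at hx
    obtain ⟨hxU, hxQ⟩ := hx
    have hx' : (x : G) ∈ ((Uplus α U : Subgroup G) : Set G) * ((Uminus α U : Subgroup G) : Set G) := by
      rw [← hU.1]; exact hxU
    obtain ⟨p, hp, m, hm, rfl⟩ := hx'
    have hpQ : p ∈ Subgroup.map (iterHom α n) (Uplus α U) :=
      le_map_iter_of_le_map α U (Uplus_le_map hα hUc) n hp
    have hmQ : m ∈ Subgroup.map (iterHom α n) (Uplus α U) := by
      have : m = p⁻¹ * (p * m) := by group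
      rw [this]
      exact mul_mem (inv_mem hpQ) hxQ
    have := mem_of_map_iter_Uplus_Umm hα hUc hUo hU.2 n hmQ (mem_Umm_of_mem_Uminus α U hm)
    exact mul_mem hp this.1
  · exact le_inf (Uplus_le_base α U) (le_map_iter_of_le_map α U (Uplus_le_map hα hUc) n)

/-- Tidy implies `α⁻ⁿ(αⁿ(U₊)) ⊓ α(U₊) = U₊`. -/
lemma comap_map_inf_map (hα : Continuous α) (hUc : IsCompact (U : Set G))
    (hUo : IsOpen (U : Set G)) (hU : Tidy α U) (n : ℕ) :
    Subgroup.comap (iterHom α n) (Subgroup.map (iterHom α n) (Uplus α U))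
      ⊓ Subgroup.map α (Uplus α U) = Uplus α U := by
  apply le_antisymm
  · intro x hx
    rw [Subgroup.mem_inf] at hx
    obtain ⟨hx1, hx2⟩ := hx
    obtain ⟨p, hp, hpx⟩ := Subgroup.mem_map.mp (Subgroup.mem_comap.mp hx1)
    have hker : iterHom α n (x * p⁻¹) = 1 := by
      rw [map_mul, map_inv, hpx, mul_inv_cancel]
    have hxp : x * p⁻¹ ∈ Subgroup.map α (Uplus α U) :=
      mul_mem hx2 (inv_mem (Uplus_le_map hα hUc hp))
    have hxpM : x * p⁻¹ ∈ Umm α U := (mem_Umm α U).mpr ⟨n, by rw [hker]; exact one_mem _⟩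
    have hxp1 : x * p⁻¹ ∈ Subgroup.map (iterHom α 1) (Uplus α U) := by
      rwa [iterHom_one]
    have := mem_of_map_iter_Uplus_Umm hα hUc hUo hU.2 1 hxp1 hxpM
    have hx : x = (x * p⁻¹) * p := by group
    rw [hx]
    exact mul_mem this.1 hp
  · refine le_inf ?_ (Uplus_le_map hα hUc)
    intro p hp
    exact Subgroup.mem_comap.mpr ⟨p, hp, rfl⟩

end Core

section Index
variable [Group G]

/-- Coset-space bijection: if `U ⊆ P * M` with `P ≤ U`, `M ≤ H ⊓ U`, then
`[U : H ∩ U] = [P : H ∩ P]`. -/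
lemma relIndex_eq_of_mul_cover {H P M U : Subgroup G} (hPU : P ≤ U) (hMH : M ≤ H)
    (hcov : (U : Set G) ⊆ (P : Set G) * (M : Set G)) :
    H.relIndex U = H.relIndex P := by
  rw [Subgroup.relIndex, Subgroup.relIndex, Subgroup.index_eq_card, Subgroup.index_eq_card]
  refine (Nat.card_eq_of_bijective (Subgroup.quotientSubgroupOfEmbeddingOfLE H hPU)
    ⟨(Subgroup.quotientSubgroupOfEmbeddingOfLE H hPU).injective, ?_⟩).symm
  intro q
  induction q using Quotient.inductionOn' with
  | h u =>
      obtain ⟨p, hp, m, hm, hpm⟩ := hcov u.2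
      refine ⟨Quotient.mk'' ⟨p, hp⟩, ?_⟩
      have : (Subgroup.quotientSubgroupOfEmbeddingOfLE H hPU) (Quotient.mk'' ⟨p, hp⟩)
          = Quotient.mk'' (Subgroup.inclusion hPU ⟨p, hp⟩) := rfl
      rw [this]
      apply Quotient.sound'
      rw [QuotientGroup.leftRel_apply]
      have hmem : (p : G)⁻¹ * (u : G) ∈ H := by
        have : (p : G)⁻¹ * (u : G) = m := by rw [← hpm]; group
        rw [this]; exact hMH hm
      exact hmem

variable [TopologicalSpace G] [IsTopologicalGroup G]

lemma relIndex_ne_zero_of_isOpen {H K : Subgroup G} (hKc : IsCompact (K : Set G))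
    (hH : IsOpen (H : Set G)) : H.relIndex K ≠ 0 := by
  haveI : CompactSpace ↥K := isCompact_iff_compactSpace.mp hKc
  haveI : Finite (↥K ⧸ H.subgroupOf K) := by
    apply Subgroup.quotient_finite_of_isOpen
    have : ((H.subgroupOf K : Subgroup ↥K) : Set ↥K) = Subtype.val ⁻¹' (H : Set G) := by
      rw [Subgroup.subgroupOf, Subgroup.coe_comap, Subgroup.coe_subtype]
    rw [this]
    exact hH.preimage continuous_subtype_val
  exact Subgroup.index_ne_zero_of_finite

variable [TotallyDisconnectedSpace G] {α : G →* G} {U : Subgroup G}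

/-- Multiplicativity of the index for a tidy subgroup. -/
lemma tidy_relIndex_pow (hα : Continuous α) (hUc : IsCompact (U : Set G))
    (hUo : IsOpen (U : Set G)) (hU : Tidy α U) (n : ℕ) :
    (Subgroup.comap (iterHom α n) U).relIndex U
      = ((Subgroup.comap α U).relIndex U) ^ n := by
  set P := Uplus α U with hP
  have hPmap : P ≤ Subgroup.map α P := Uplus_le_map hα hUc
  have hPiter : ∀ m, P ≤ Subgroup.map (iterHom α m) P :=
    le_map_iter_of_le_map α U hPmap
  have hmapsucc : ∀ m, Subgroup.map (iterHom α (m + 1)) P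
      = Subgroup.map (iterHom α m) (Subgroup.map α P) := by
    intro m
    rw [Subgroup.map_map, ← iterHom_succ']
  have hQmono : ∀ m, Subgroup.map (iterHom α m) P ≤ Subgroup.map (iterHom α (m + 1)) P := by
    intro m
    rw [hmapsucc m]
    exact Subgroup.map_mono hPmap
  have hstep : ∀ m, (Subgroup.map (iterHom α m) P).relIndex (Subgroup.map (iterHom α (m + 1)) P)
      = P.relIndex (Subgroup.map α P) := by
    intro m
    have h1 := Subgroup.relIndex_comap (Subgroup.map (iterHom α m) P) (iterHom α m)
      (Subgroup.map α P)
    have h2 : (Subgroup.comap (iterHom α m) (Subgroup.map (iterHom α m) P))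
        ⊓ (Subgroup.map α P) = P := comap_map_inf_map hα hUc hUo hU m
    rw [hmapsucc m, ← h1, ← Subgroup.inf_relIndex_right, h2]
  have hR : ∀ m, P.relIndex (Subgroup.map (iterHom α m) P)
      = (P.relIndex (Subgroup.map α P)) ^ m := by
    intro m
    induction m with
    | zero =>
        rw [pow_zero, iterHom_zero, Subgroup.map_id, Subgroup.relIndex_self]
    | succ m ih =>
        rw [← Subgroup.relIndex_mul_relIndex P (Subgroup.map (iterHom α m) P)
          (Subgroup.map (iterHom α (m + 1)) P) (hPiter m) (hQmono m), ih, hstep m, pow_succ]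
  have key : ∀ m, (Subgroup.comap (iterHom α m) U).relIndex U
      = (P.relIndex (Subgroup.map α P)) ^ m := by
    intro m
    have c1 : (Subgroup.comap (iterHom α m) U).relIndex U
        = (Subgroup.comap (iterHom α m) U).relIndex P :=
      relIndex_eq_of_mul_cover (Uplus_le_base α U) (Uminus_le α U m) hU.1.le
    have c2 : (Subgroup.comap (iterHom α m) U).relIndex P
        = U.relIndex (Subgroup.map (iterHom α m) P) :=
      Subgroup.relIndex_comap U (iterHom α m) P
    have c3 : U ⊓ Subgroup.map (iterHom α m) P = P := inf_map_iter_Uplus hα hUc hUo hU m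
    rw [c1, c2, ← Subgroup.inf_relIndex_right, c3, hR m]
  have base : (Subgroup.comap α U).relIndex U = P.relIndex (Subgroup.map α P) := by
    have := key 1
    rwa [iterHom_one, pow_one] at this
  rw [key n, base]

/-- Comparison of indices for two compact open subgroups. -/
lemma relIndex_comparison (hα : Continuous α) {U₁ U₂ : Subgroup G}
    (hU₁c : IsCompact (U₁ : Set G)) (hU₁o : IsOpen (U₁ : Set G))
    (hU₂c : IsCompact (U₂ : Set G)) (hU₂o : IsOpen (U₂ : Set G)) (n : ℕ) :
    (Subgroup.comap (iterHom α n) U₁).relIndex U₁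
      ≤ (U₁.relIndex U₂ * (U₁ ⊓ U₂).relIndex U₁)
        * ((Subgroup.comap (iterHom α n) U₂).relIndex U₂) := by
  have ht2 := myT2 (G := G)
  set W := U₁ ⊓ U₂ with hW
  set A := Subgroup.comap (iterHom α n) U₂ with hA
  set B := Subgroup.comap (iterHom α n) U₁ with hB
  set C := Subgroup.comap (iterHom α n) W with hC
  have hWo : IsOpen (W : Set G) := by
    rw [hW, Subgroup.coe_inf]; exact hU₁o.inter hU₂o
  have hWc : IsCompact (W : Set G) := by
    rw [hW, Subgroup.coe_inf]; exact hU₁c.inter_right (isClosed_coe hU₂o)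
  have hAo : IsOpen (A : Set G) := by
    rw [hA, Subgroup.coe_comap]; exact hU₂o.preimage (continuous_iterHom hα n)
  have hCo : IsOpen (C : Set G) := by
    rw [hC, Subgroup.coe_comap]; exact hWo.preimage (continuous_iterHom hα n)
  have hCA : C ≤ A := Subgroup.comap_mono (inf_le_right)
  have hCB : C ≤ B := Subgroup.comap_mono (inf_le_left)
  have hWU₁ : W ≤ U₁ := inf_le_left
  have hWU₂ : W ≤ U₂ := inf_le_right
  have hWCopen : IsOpen ((W ⊓ C : Subgroup G) : Set G) := by
    rw [Subgroup.coe_inf]; exact hWo.inter hCo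
  have hWAopen : IsOpen ((W ⊓ A : Subgroup G) : Set G) := by
    rw [Subgroup.coe_inf]; exact hWo.inter hAo
  have hWAc : IsCompact ((W ⊓ A : Subgroup G) : Set G) := by
    rw [Subgroup.coe_inf]; exact hWc.inter_right (isClosed_coe hAo)
  -- step 1
  have s1 : B.relIndex U₁ ≤ (W ⊓ C).relIndex U₁ :=
    Subgroup.relIndex_le_of_le_left (le_trans inf_le_right hCB)
      (relIndex_ne_zero_of_isOpen hU₁c hWCopen)
  -- step 2 : tower
  have s2 : (W ⊓ C).relIndex U₁
      = (W ⊓ C).relIndex W * W.relIndex U₁ :=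
    (Subgroup.relIndex_mul_relIndex (W ⊓ C) W U₁ inf_le_left hWU₁).symm
  -- step 3 : tower inside W
  have hWCWA : W ⊓ C ≤ W ⊓ A := inf_le_inf_left W hCA
  have s3 : (W ⊓ C).relIndex W
      = (W ⊓ C).relIndex (W ⊓ A) * (W ⊓ A).relIndex W :=
    (Subgroup.relIndex_mul_relIndex (W ⊓ C) (W ⊓ A) W hWCWA inf_le_left).symm
  -- step 4 : [W : W ⊓ A] ≤ [U₂ : U₂ ⊓ A]
  have s4 : (W ⊓ A).relIndex W ≤ A.relIndex U₂ := by
    have e1 : (W ⊓ A).relIndex W = A.relIndex W := by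
      rw [inf_comm, Subgroup.inf_relIndex_right]
    rw [e1]
    exact Subgroup.relIndex_le_of_le_right hWU₂ (relIndex_ne_zero_of_isOpen hU₂c hAo)
  -- step 5 : [W ⊓ A : W ⊓ C] ≤ [U₂ : W]
  have s5 : (W ⊓ C).relIndex (W ⊓ A) ≤ U₁.relIndex U₂ := by
    have hWCeq : W ⊓ C = B ⊓ (W ⊓ A) := by
      rw [hC, hW, Subgroup.comap_inf, ← hA, ← hB, ← hW]
      exact inf_left_comm W B A
    have e2 : (W ⊓ C).relIndex (W ⊓ A) = B.relIndex (W ⊓ A) := by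
      rw [hWCeq, Subgroup.inf_relIndex_right]
    have e3 : B.relIndex (W ⊓ A) = U₁.relIndex (Subgroup.map (iterHom α n) (W ⊓ A)) :=
      Subgroup.relIndex_comap U₁ (iterHom α n) (W ⊓ A)
    have e4 : Subgroup.map (iterHom α n) (W ⊓ A) ≤ U₂ := by
      calc Subgroup.map (iterHom α n) (W ⊓ A)
          ≤ Subgroup.map (iterHom α n) A := Subgroup.map_mono inf_le_right
        _ ≤ U₂ := by rw [hA]; exact Subgroup.map_comap_le _ _
    have e5 : U₁.relIndex (Subgroup.map (iterHom α n) (W ⊓ A)) ≤ U₁.relIndex U₂ :=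
      Subgroup.relIndex_le_of_le_right e4 (relIndex_ne_zero_of_isOpen hU₂c hU₁o)
    rw [e2, e3]; exact e5
  calc B.relIndex U₁ ≤ (W ⊓ C).relIndex U₁ := s1
    _ = ((W ⊓ C).relIndex (W ⊓ A) * (W ⊓ A).relIndex W) * W.relIndex U₁ := by rw [s2, s3]
    _ ≤ (U₁.relIndex U₂ * A.relIndex U₂) * W.relIndex U₁ := by
        exact Nat.mul_le_mul_right _ (Nat.mul_le_mul s5 s4)
    _ = (U₁.relIndex U₂ * W.relIndex U₁) * A.relIndex U₂ := by ring
    _ = (U₁.relIndex U₂ * (U₁ ⊓ U₂).relIndex U₁) * A.relIndex U₂ := by rw [hW]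

end Index

/-- Arithmetic: if `aⁿ ≤ c·bⁿ` for all `n` and `b > 0` then `a ≤ b`. -/
lemma le_of_pow_le_mul_pow {a b c : ℕ} (hb : 0 < b) (h : ∀ n, a ^ n ≤ c * b ^ n) : a ≤ b := by
  by_contra hab
  push_neg at hab
  have key : ∀ n, (b + n) * b ^ n ≤ b * (b + 1) ^ n := by
    intro n
    induction n with
    | zero => simp
    | succ n ih =>
        have h1 : (b + (n + 1)) * b ^ (n + 1) ≤ (b + 1) * ((b + n) * b ^ n) := by
          ring_nf
          nlinarith [pow_pos hb n, Nat.le_refl 0]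
        calc (b + (n + 1)) * b ^ (n + 1) ≤ (b + 1) * ((b + n) * b ^ n) := h1
          _ ≤ (b + 1) * (b * (b + 1) ^ n) := Nat.mul_le_mul_left _ ih
          _ = b * (b + 1) ^ (n + 1) := by ring
  have h2 : ∀ n, (b + n) * b ^ n ≤ (b * c) * b ^ n := by
    intro n
    calc (b + n) * b ^ n ≤ b * (b + 1) ^ n := key n
      _ ≤ b * a ^ n := Nat.mul_le_mul_left _ (Nat.pow_le_pow_left hab n)
      _ ≤ b * (c * b ^ n) := Nat.mul_le_mul_left _ (h n)
      _ = (b * c) * b ^ n := by ring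
  have h3 : ∀ n, b + n ≤ b * c := fun n =>
    Nat.le_of_mul_le_mul_right (h2 n) (Nat.pow_pos (n := n) hb)
  have := h3 (b * c + 1)
  omega

/-- Any two compact open subgroups tidy for `α` give the same index
`[U : U ∩ α⁻¹(U)]`. -/
theorem tidy_index_eq [Group G] [TopologicalSpace G] [IsTopologicalGroup G]
    [TotallyDisconnectedSpace G] [LocallyCompactSpace G]
    (α : G →* G) (hα : Continuous α)
    (U₁ U₂ : Subgroup G)
    (hU₁c : IsCompact (U₁ : Set G)) (hU₁o : IsOpen (U₁ : Set G)) (hU₁ : Tidy α U₁)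
    (hU₂c : IsCompact (U₂ : Set G)) (hU₂o : IsOpen (U₂ : Set G)) (hU₂ : Tidy α U₂) :
    Subgroup.relIndex (Subgroup.comap α U₁) U₁
      = Subgroup.relIndex (Subgroup.comap α U₂) U₂ := by
  set s₁ := (Subgroup.comap α U₁).relIndex U₁ with hs₁
  set s₂ := (Subgroup.comap α U₂).relIndex U₂ with hs₂
  have hs₁pos : 0 < s₁ := by
    refine Nat.pos_of_ne_zero (relIndex_ne_zero_of_isOpen hU₁c ?_)
    rw [Subgroup.coe_comap]; exact hU₁o.preimage hα
  have hs₂pos : 0 < s₂ := by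
    refine Nat.pos_of_ne_zero (relIndex_ne_zero_of_isOpen hU₂c ?_)
    rw [Subgroup.coe_comap]; exact hU₂o.preimage hα
  have hA₁ := tidy_relIndex_pow hα hU₁c hU₁o hU₁
  have hA₂ := tidy_relIndex_pow hα hU₂c hU₂o hU₂
  have h12 : ∀ n, s₁ ^ n ≤ (U₁.relIndex U₂ * (U₁ ⊓ U₂).relIndex U₁) * s₂ ^ n := by
    intro n
    rw [← hA₁ n, ← hA₂ n]
    exact relIndex_comparison hα hU₁c hU₁o hU₂c hU₂o n
  have h21 : ∀ n, s₂ ^ n ≤ (U₂.relIndex U₁ * (U₂ ⊓ U₁).relIndex U₂) * s₁ ^ n := by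
    intro n
    rw [← hA₁ n, ← hA₂ n]
    exact relIndex_comparison hα hU₂c hU₂o hU₁c hU₁o n
  exact le_antisymm (le_of_pow_le_mul_pow hs₂pos h12) (le_of_pow_le_mul_pow hs₁pos h21)
end

section
/- Let G be a totally disconnected locally compact group, α a continuous endomorphism of G, and U a compact open subgroup of G that is tidy above for α. Then [α(U) : U ∩ α(U)] = [α(U₊) : U₊]. -/
open Pointwise Subgroup Filter

variable {G : Type*}

/-- If `T ⊆ H * K` with `H, K ≤ T` then `[T : K] = [H : H ⊓ K]` (coset counting). -/
lemma relindex_of_mul_eq [Group G] (H K T : Subgroup G) (hH : H ≤ T) (hK : K ≤ T)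
    (hmul : (T : Set G) ⊆ (H : Set G) * (K : Set G)) :
    K.relIndex T = (K ⊓ H).relIndex H := by
  let f : H ⧸ ((K ⊓ H).subgroupOf H) → T ⧸ (K.subgroupOf T) :=
    Quotient.map' (fun x => ⟨(x : G), hH x.2⟩)
      (by
        intro a b hab
        rw [QuotientGroup.leftRel_apply] at hab ⊢
        rw [Subgroup.mem_subgroupOf] at hab ⊢
        simpa using hab.1)
  have hfmk : ∀ a : H, f (Quotient.mk'' a) = Quotient.mk'' ⟨(a : G), hH a.2⟩ :=
    fun a => rfl
  have hbij : Function.Bijective f := by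
    constructor
    · intro a b hab
      induction a using Quotient.inductionOn'
      induction b using Quotient.inductionOn'
      rename_i a b
      rw [hfmk, hfmk] at hab
      rw [Quotient.eq''] at hab ⊢
      rw [QuotientGroup.leftRel_apply] at hab ⊢
      rw [Subgroup.mem_subgroupOf] at hab ⊢
      refine ⟨by simpa using hab, ?_⟩
      simpa using mul_mem (inv_mem a.2) b.2
    · intro q
      induction q using Quotient.inductionOn'
      rename_i t
      obtain ⟨h, hh, k, hk, hhk⟩ := hmul t.2
      refine ⟨Quotient.mk'' ⟨h, hh⟩, ?_⟩
      rw [hfmk, Quotient.eq'', QuotientGroup.leftRel_apply, Subgroup.mem_subgroupOf]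
      show h⁻¹ * (t : G) ∈ K
      rw [← hhk]
      simpa using hk
  calc K.relIndex T = Nat.card (T ⧸ (K.subgroupOf T)) := rfl
    _ = Nat.card (H ⧸ ((K ⊓ H).subgroupOf H)) := (Nat.card_congr (Equiv.ofBijective f hbij)).symm
    _ = (K ⊓ H).relIndex H := rfl

/-- For `U` tidy above: `[α(U) : U ∩ α(U)] = [α(U₊) : U₊]`. -/
theorem tidyAbove_index_plus [Group G] [TopologicalSpace G] [IsTopologicalGroup G]
    [TotallyDisconnectedSpace G] [LocallyCompactSpace G]
    (α : G →* G) (hα : Continuous α)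
    (U : Subgroup G) (hUc : IsCompact (U : Set G)) (hUo : IsOpen (U : Set G))
    (hU : TidyAbove α U) :
    Subgroup.relIndex U (Subgroup.map α U)
      = Subgroup.relIndex (Uplus α U) (Subgroup.map α (Uplus α U)) := by
  haveI : T2Space G := IsTopologicalGroup.t2Space_iff_one_closed.2 <| by
    have h1 := isClosed_connectedComponent (x := (1 : G))
    rwa [connectedComponent_eq_singleton] at h1
  have hanti : ∀ n, seqU α U (n + 1) ≤ seqU α U n := by
    intro n
    induction n with
    | zero => exact inf_le_left
    | succ n ih => exact inf_le_inf le_rfl (Subgroup.map_mono ih)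
  have hcomp : ∀ n, IsCompact (seqU α U n : Set G) := by
    intro n
    induction n with
    | zero => exact hUc
    | succ n ih =>
      show IsCompact ((U ⊓ Subgroup.map α (seqU α U n) : Subgroup G) : Set G)
      rw [Subgroup.coe_inf, Subgroup.coe_map]
      exact hUc.inter_right (ih.image hα).isClosed
  have hUplus_le : ∀ n, Uplus α U ≤ seqU α U n := fun n => iInf_le _ n
  have hmemUplus : ∀ x : G, x ∈ Uplus α U ↔ ∀ n, x ∈ seqU α U n := fun x => Subgroup.mem_iInf
  -- key: `U₊ ≤ α(U₊)`, via compactness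
  have hle : Uplus α U ≤ Subgroup.map α (Uplus α U) := by
    intro x hx
    set K : ℕ → Set G := fun n => (α ⁻¹' {x}) ∩ (seqU α U n : Set G) with hK
    have hKne : ∀ n, (K n).Nonempty := by
      intro n
      have hx1 : x ∈ seqU α U (n + 1) := (hmemUplus x).1 hx (n + 1)
      obtain ⟨z, hz, hzx⟩ := hx1.2
      exact ⟨z, by simpa using hzx, hz⟩
    have hKcl : ∀ n, IsClosed (K n) := fun n =>
      (isClosed_singleton.preimage hα).inter (hcomp n).isClosed
    have hKanti : ∀ n, K (n + 1) ⊆ K n := fun n =>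
      Set.inter_subset_inter_right _ (hanti n)
    have hKc : IsCompact (K 0) := (hcomp 0).inter_left (isClosed_singleton.preimage hα)
    obtain ⟨z, hz⟩ := IsCompact.nonempty_iInter_of_sequence_nonempty_isCompact_isClosed
      K hKanti hKne hKc hKcl
    simp only [Set.mem_iInter, K, Set.mem_inter_iff, Set.mem_preimage,
      Set.mem_singleton_iff, SetLike.mem_coe] at hz
    exact ⟨z, (hmemUplus z).2 fun n => (hz n).2, (hz 0).1⟩
  -- key: `U ⊓ α(U₊) = U₊`
  have hKey : U ⊓ Subgroup.map α (Uplus α U) = Uplus α U := by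
    apply le_antisymm
    · intro x hx
      refine (hmemUplus x).2 fun n => ?_
      cases n with
      | zero => exact hx.1
      | succ n => exact ⟨hx.1, Subgroup.map_mono (hUplus_le n) hx.2⟩
    · exact le_inf (hUplus_le 0) hle
  set T := Subgroup.map α U with hT
  set H := Subgroup.map α (Uplus α U) with hHdef
  set K := U ⊓ T with hKdef
  have hHT : H ≤ T := Subgroup.map_mono (hUplus_le 0)
  have hKT : K ≤ T := inf_le_right
  have hUminus_le_U : Uminus α U ≤ U := by
    have h0 := iInf_le (fun n => Subgroup.comap (iterHom α n) U) 0
    simpa [Uminus, iterHom] using h0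
  have hUminus_map : ∀ m ∈ Uminus α U, α m ∈ U := by
    intro m hm
    have h1 := Subgroup.mem_iInf.1 hm 1
    simpa [iterHom] using h1
  have hmul : (T : Set G) ⊆ (H : Set G) * (K : Set G) := by
    rintro t ⟨u, hu, rfl⟩
    have hU' : (U : Set G) = (Uplus α U : Set G) * (Uminus α U : Set G) := hU
    have hu' : u ∈ (Uplus α U : Set G) * (Uminus α U : Set G) := hU' ▸ hu
    obtain ⟨p, hp, m, hm, rfl⟩ := hu'
    exact ⟨α p, ⟨p, hp, rfl⟩, α m,
      ⟨hUminus_map m hm, ⟨m, hUminus_le_U hm, rfl⟩⟩, (map_mul α p m).symm⟩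
  have main := relindex_of_mul_eq H K T hHT hKT hmul
  have hKH : K ⊓ H = Uplus α U := by
    rw [hKdef, inf_assoc, inf_eq_right.2 hHT, hKey]
  calc U.relIndex T = (U ⊓ T).relIndex T := (Subgroup.inf_relIndex_right U T).symm
    _ = (K ⊓ H).relIndex H := main
    _ = (Uplus α U).relIndex H := by rw [hKH]
end

section
/- Let G be a totally disconnected locally compact group, α a continuous endomorphism of G, and U a compact open subgroup of G. Then U is tidy for α if and only if [U : U ∩ α^{-n}(U)] = [U : U ∩ α⁻¹(U)]ⁿ for all n ≥ 1. -/
open Pointwise Subgroup Filter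

variable {G : Type*}

namespace TidyAux

variable {G : Type*} [Group G] (α : G →* G) (U : Subgroup G)

theorem iterHom_zero (x : G) : iterHom α 0 x = x := rfl
theorem iterHom_succ (n : ℕ) (x : G) : iterHom α (n + 1) x = α (iterHom α n x) := rfl
theorem iterHom_one (x : G) : iterHom α 1 x = α x := rfl

theorem iterHom_add (m n : ℕ) (x : G) :
    iterHom α (m + n) x = iterHom α m (iterHom α n x) := by
  induction m with
  | zero => simp [Nat.zero_add, iterHom_zero]
  | succ k ih => rw [Nat.succ_add, iterHom_succ, iterHom_succ, ih]

theorem iterHom_comm (n : ℕ) (x : G) :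
    iterHom α n (α x) = α (iterHom α n x) := by
  have h1 : iterHom α n (α x) = iterHom α n (iterHom α 1 x) := rfl
  rw [h1, ← iterHom_add, Nat.add_comm, iterHom_add]
  rfl

theorem iterHom_continuous [TopologicalSpace G] (hα : Continuous α) (n : ℕ) :
    Continuous (iterHom α n) := by
  induction n with
  | zero => exact continuous_id
  | succ k ih => exact hα.comp ih

/-- `C α U n = α^{-n}(U)`. -/
def C (n : ℕ) : Subgroup G := Subgroup.comap (iterHom α n) U

theorem mem_C {n : ℕ} {x : G} : x ∈ C α U n ↔ iterHom α n x ∈ U := Iff.rfl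

theorem C_zero : C α U 0 = U := by ext x; rfl

theorem C_one : C α U 1 = Subgroup.comap α U := by ext x; rfl

theorem mem_Uminus {x : G} : x ∈ Uminus α U ↔ ∀ n, iterHom α n x ∈ U := by
  simp [Uminus, Subgroup.mem_iInf, Subgroup.mem_comap]

theorem Uminus_le : Uminus α U ≤ U := fun x hx => (mem_Uminus α U).1 hx 0

theorem Uminus_le_C (n : ℕ) : Uminus α U ≤ C α U n := fun x hx =>
  (mem_Uminus α U).1 hx n

theorem apply_mem_Uminus {x : G} (hx : x ∈ Uminus α U) : α x ∈ Uminus α U := by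
  rw [mem_Uminus] at hx ⊢
  intro n
  rw [iterHom_comm, ← iterHom_succ]
  exact hx (n + 1)

theorem iterHom_mem_Uminus {x : G} (hx : x ∈ Uminus α U) (n : ℕ) :
    iterHom α n x ∈ Uminus α U := by
  induction n with
  | zero => exact hx
  | succ k ih => rw [iterHom_succ]; exact apply_mem_Uminus α U ih

theorem iterHom_mem_Uminus_of_le {x : G} {m n : ℕ} (hmn : m ≤ n)
    (hx : iterHom α m x ∈ Uminus α U) : iterHom α n x ∈ Uminus α U := by
  obtain ⟨k, rfl⟩ := Nat.exists_eq_add_of_le hmn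
  rw [Nat.add_comm, iterHom_add]
  exact iterHom_mem_Uminus α U hx k

theorem mem_Umm {x : G} : x ∈ Umm α U ↔ ∃ n, iterHom α n x ∈ Uminus α U := by
  simp [Umm]

theorem Uminus_subset_Umm : (Uminus α U : Set G) ⊆ Umm α U := fun x hx =>
  (mem_Umm α U).2 ⟨0, hx⟩

theorem mul_mem_Umm {x y : G} (hx : x ∈ Umm α U) (hy : y ∈ Umm α U) :
    x * y ∈ Umm α U := by
  rw [mem_Umm] at hx hy ⊢
  obtain ⟨m, hm⟩ := hx
  obtain ⟨n, hn⟩ := hy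
  refine ⟨max m n, ?_⟩
  rw [map_mul]
  exact mul_mem (iterHom_mem_Uminus_of_le α U (le_max_left m n) hm)
    (iterHom_mem_Uminus_of_le α U (le_max_right m n) hn)

theorem inv_mem_Umm {x : G} (hx : x ∈ Umm α U) : x⁻¹ ∈ Umm α U := by
  rw [mem_Umm] at hx ⊢
  obtain ⟨m, hm⟩ := hx
  exact ⟨m, by rw [map_inv]; exact inv_mem hm⟩

theorem mem_Uplus {x : G} : x ∈ Uplus α U ↔ ∀ n, x ∈ seqU α U n := Subgroup.mem_iInf

theorem seqU_le (n : ℕ) : seqU α U n ≤ U := by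
  cases n with
  | zero => exact le_rfl
  | succ k => exact inf_le_left

theorem Uplus_le : Uplus α U ≤ U := fun x hx => seqU_le α U 0 ((mem_Uplus α U).1 hx 0)

theorem seqU_antitone {m n : ℕ} (hmn : m ≤ n) : seqU α U n ≤ seqU α U m := by
  induction n with
  | zero => simp_all
  | succ k ih =>
    rcases Nat.lt_or_ge m (k+1) with h | h
    · have h1 : seqU α U (k+1) ≤ seqU α U k := by
        clear ih h hmn
        induction k with
        | zero => exact inf_le_left
        | succ j ihj => exact inf_le_inf le_rfl (Subgroup.map_mono ihj)
      exact le_trans h1 (ih (Nat.lt_succ_iff.1 h))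
    · have : m = k + 1 := le_antisymm hmn h
      subst this; exact le_rfl

section Top
variable [TopologicalSpace G] [IsTopologicalGroup G] [TotallyDisconnectedSpace G]

theorem seqU_isCompact (hα : Continuous α) (hUc : IsCompact (U : Set G)) (hUo : IsOpen (U : Set G)) (n : ℕ) : IsCompact ((seqU α U n : Subgroup G) : Set G) := by
  induction n with
  | zero => exact hUc
  | succ k ih =>
    have h1 : ((seqU α U (k+1) : Subgroup G) : Set G)
        = (α '' (seqU α U k : Set G)) ∩ (U : Set G) := by
      show ((U ⊓ Subgroup.map α (seqU α U k) : Subgroup G) : Set G) = _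
      rw [Subgroup.coe_inf, Subgroup.coe_map]
      exact Set.inter_comm _ _
    rw [h1]
    exact (ih.image hα).inter_right (U.isClosed_of_isOpen hUo)

theorem mem_Uplus_iff_exists (hα : Continuous α) (hUc : IsCompact (U : Set G)) (hUo : IsOpen (U : Set G)) {x : G} :
    x ∈ Uplus α U ↔ x ∈ U ∧ ∃ y ∈ Uplus α U, α y = x := by
  constructor
  · intro hx
    have hxn := (mem_Uplus α U).1 hx
    refine ⟨seqU_le α U 0 (hxn 0), ?_⟩
    -- fibers
    set F : ℕ → Set G := fun n => (α ⁻¹' {x}) ∩ (seqU α U n : Set G) with hF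
    have hFne : ∀ n, (F n).Nonempty := by
      intro n
      have := hxn (n + 1)
      have : x ∈ Subgroup.map α (seqU α U n) := by
        have h2 : seqU α U (n+1) = U ⊓ Subgroup.map α (seqU α U n) := rfl
        rw [h2] at this
        exact this.2
      obtain ⟨y, hy, hyx⟩ := this
      exact ⟨y, by simp [hF, hyx], hy⟩
    have hFdec : ∀ n, F (n + 1) ⊆ F n := by
      intro n
      apply Set.inter_subset_inter_right
      have : seqU α U (n+1) ≤ seqU α U n := by
        induction n with
        | zero => exact inf_le_left
        | succ j ihj => exact inf_le_inf le_rfl (Subgroup.map_mono ihj)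
      exact this
    have hFcl : ∀ n, IsClosed (F n) := by
      intro n
      exact (IsClosed.preimage hα isClosed_singleton).inter
        ((seqU_isCompact α U hα hUc hUo n).isClosed)
    have hF0 : IsCompact (F 0) := by
      exact ((seqU_isCompact α U hα hUc hUo 0).inter_left
        (IsClosed.preimage hα isClosed_singleton))
    obtain ⟨y, hy⟩ := IsCompact.nonempty_iInter_of_sequence_nonempty_isCompact_isClosed
      F hFdec hFne hF0 hFcl
    simp only [Set.mem_iInter, hF, Set.mem_inter_iff, Set.mem_preimage,
      Set.mem_singleton_iff] at hy
    refine ⟨y, (mem_Uplus α U).2 fun n => (hy n).2, (hy 0).1⟩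
  · rintro ⟨hxU, y, hy, rfl⟩
    rw [mem_Uplus]
    intro n
    cases n with
    | zero => exact hxU
    | succ k =>
      exact ⟨hxU, ⟨y, (mem_Uplus α U).1 hy k, rfl⟩⟩

theorem apply_mem_Uplus (hα : Continuous α) (hUc : IsCompact (U : Set G)) (hUo : IsOpen (U : Set G)) {x : G} (hx : x ∈ Uplus α U) (hx2 : α x ∈ U) :
    α x ∈ Uplus α U :=
  (mem_Uplus_iff_exists α U hα hUc hUo).2 ⟨hx2, x, hx, rfl⟩

theorem exists_history (hα : Continuous α) (hUc : IsCompact (U : Set G)) (hUo : IsOpen (U : Set G)) (k : ℕ) :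
    ∀ {x : G}, x ∈ Uplus α U → ∃ y, iterHom α k y = x ∧ ∀ j ≤ k, iterHom α j y ∈ Uplus α U := by
  induction k with
  | zero => exact fun {x} hx => ⟨x, rfl, fun j hj => by simp_all [Nat.le_zero]; exact hx⟩
  | succ m ih =>
    intro x hx
    obtain ⟨-, y1, hy1, hy1x⟩ := (mem_Uplus_iff_exists α U hα hUc hUo).1 hx
    obtain ⟨y, hyk, hyall⟩ := ih hy1
    refine ⟨y, ?_, ?_⟩
    · rw [iterHom_succ, hyk, hy1x]
    · intro j hj
      rcases Nat.lt_or_ge j (m + 1) with h | h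
      · exact hyall j (Nat.lt_succ_iff.1 h)
      · have : j = m + 1 := le_antisymm hj h
        subst this
        rw [iterHom_succ, hyk, hy1x]
        exact hx
end Top

section QMap
/-- The map on left-coset spaces induced by a homomorphism `f`. -/
noncomputable def qmap (f : G →* G) (P Q A B : Subgroup G)
    (h1 : ∀ x ∈ P, f x ∈ Q)
    (h2 : ∀ x ∈ P, (f x ∈ B ↔ x ∈ A)) :
    (↥P ⧸ A.subgroupOf P) → (↥Q ⧸ B.subgroupOf Q) :=
  Quotient.map' (fun x => (⟨f x, h1 x x.2⟩ : ↥Q))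
    (by
      intro a b hab
      rw [QuotientGroup.leftRel_apply] at hab ⊢
      rw [Subgroup.mem_subgroupOf] at hab ⊢
      have : (f : G →* G) ((a : G)⁻¹ * (b : G)) ∈ B := by
        rw [h2 _ (mul_mem (inv_mem a.2) b.2)]
        exact hab
      simpa [map_mul, map_inv] using this)

theorem qmap_mk (f : G →* G) (P Q A B : Subgroup G) (h1) (h2) (x : ↥P) :
    qmap f P Q A B h1 h2 (QuotientGroup.mk x) = QuotientGroup.mk ⟨f x, h1 x x.2⟩ :=
  rfl

theorem qmap_injective (f : G →* G) (P Q A B : Subgroup G) (h1) (h2) :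
    Function.Injective (qmap f P Q A B h1 h2) := by
  intro a b
  induction a using Quotient.inductionOn'
  induction b using Quotient.inductionOn'
  rename_i a b
  intro hab
  have : QuotientGroup.mk (⟨f a, h1 a a.2⟩ : ↥Q) = QuotientGroup.mk ⟨f b, h1 b b.2⟩ := hab
  rw [QuotientGroup.eq, Subgroup.mem_subgroupOf] at this
  show QuotientGroup.mk a = QuotientGroup.mk b
  rw [QuotientGroup.eq, Subgroup.mem_subgroupOf]
  have h4 : (f : G →* G) ((a : G)⁻¹ * (b : G)) ∈ B := by
    simpa [map_mul, map_inv] using this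
  rw [h2 _ (mul_mem (inv_mem a.2) b.2)] at h4
  simpa using h4

theorem qmap_surjective (f : G →* G) (P Q A B : Subgroup G) (h1) (h2)
    (h3 : ∀ y ∈ Q, ∃ x ∈ P, (f x)⁻¹ * y ∈ B) :
    Function.Surjective (qmap f P Q A B h1 h2) := by
  intro b
  induction b using Quotient.inductionOn'
  rename_i b
  obtain ⟨x, hxP, hx⟩ := h3 b b.2
  refine ⟨QuotientGroup.mk ⟨x, hxP⟩, ?_⟩
  rw [qmap_mk]
  show _ = QuotientGroup.mk b
  rw [QuotientGroup.eq, Subgroup.mem_subgroupOf]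
  exact hx

theorem relindex_eq_of_qmap_bij (f : G →* G) (P Q A B : Subgroup G) (h1 : ∀ x ∈ P, f x ∈ Q) (h2 : ∀ x ∈ P, (f x ∈ B ↔ x ∈ A))
    (h3 : ∀ y ∈ Q, ∃ x ∈ P, (f x)⁻¹ * y ∈ B) :
    A.relIndex P = B.relIndex Q := by
  rw [Subgroup.relIndex, Subgroup.relIndex, Subgroup.index_eq_card, Subgroup.index_eq_card]
  exact Nat.card_eq_of_bijective _
    ⟨qmap_injective f P Q A B h1 h2, qmap_surjective f P Q A B h1 h2 h3⟩

theorem relindex_le_of_qmap (f : G →* G) (P Q A B : Subgroup G) (h1 : ∀ x ∈ P, f x ∈ Q) (h2 : ∀ x ∈ P, (f x ∈ B ↔ x ∈ A))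
    [Finite (↥Q ⧸ B.subgroupOf Q)] :
    A.relIndex P ≤ B.relIndex Q := by
  rw [Subgroup.relIndex, Subgroup.relIndex, Subgroup.index_eq_card, Subgroup.index_eq_card]
  exact Nat.card_le_card_of_injective _ (qmap_injective f P Q A B h1 h2)

/-- Injective + equal (finite) cardinality forces surjectivity. -/
theorem surj_of_inj_card {X Y : Type*} [Finite Y] (g : X → Y) (hg : Function.Injective g)
    (hcard : Nat.card Y ≤ Nat.card X) : Function.Surjective g := by
  have h1 : Nat.card (Set.range g) = Nat.card X := Nat.card_range_of_injective hg
  have h2 : Set.range g = Set.univ := by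
    apply Set.eq_of_subset_of_ncard_le (Set.subset_univ _)
    rw [Set.ncard_univ, ← Nat.card_coe_set_eq, h1]
    exact hcard
  exact Set.range_eq_univ.mp h2

/-- A version of qmap surjectivity extraction. -/
theorem exists_of_qmap_surj (f : G →* G) (P Q A B : Subgroup G) (h1 : ∀ x ∈ P, f x ∈ Q) (h2 : ∀ x ∈ P, (f x ∈ B ↔ x ∈ A))
    (hs : Function.Surjective (qmap f P Q A B h1 h2)) :
    ∀ y ∈ Q, ∃ x ∈ P, (f x)⁻¹ * y ∈ B := by
  intro y hy
  obtain ⟨a, ha⟩ := hs (QuotientGroup.mk ⟨y, hy⟩)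
  induction a using Quotient.inductionOn'
  rename_i a
  rw [qmap_mk] at ha
  have : QuotientGroup.mk (⟨f a, h1 a a.2⟩ : ↥Q) = QuotientGroup.mk ⟨y, hy⟩ := ha
  rw [QuotientGroup.eq, Subgroup.mem_subgroupOf] at this
  exact ⟨a, a.2, this⟩

/-- Finiteness of coset space of an open subgroup in a compact set of a topological group. -/
theorem finite_quotient [TopologicalSpace G] [IsTopologicalGroup G]
    (P H : Subgroup G) (hP : IsCompact (P : Set G)) (hH : IsOpen (H : Set G)) :
    Finite (↥P ⧸ H.subgroupOf P) := by
  have hcover : (P : Set G) ⊆ ⋃ x : ↥P, (x : G) • (H : Set G) := by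
    intro p hp
    exact Set.mem_iUnion.2 ⟨⟨p, hp⟩, ⟨1, H.one_mem, by simp⟩⟩
  obtain ⟨t, ht⟩ := hP.elim_finite_subcover (fun x : ↥P => (x : G) • (H : Set G))
    (fun x => hH.smul _) hcover
  have : ∀ q : ↥P ⧸ H.subgroupOf P, ∃ x ∈ t, QuotientGroup.mk x = q := by
    intro q
    induction q using Quotient.inductionOn'
    rename_i p
    obtain ⟨x, hxt, hx⟩ : ∃ x ∈ t, (p : G) ∈ (x : G) • (H : Set G) := by
      simpa using ht p.2
    refine ⟨x, hxt, ?_⟩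
    show QuotientGroup.mk x = QuotientGroup.mk p
    rw [QuotientGroup.eq, Subgroup.mem_subgroupOf]
    have h5 := Set.mem_smul_set_iff_inv_smul_mem.mp hx
    simpa [smul_eq_mul] using h5

  have hsurj : Function.Surjective (fun x : {x : ↥P // x ∈ t} =>
      (QuotientGroup.mk x.1 : ↥P ⧸ H.subgroupOf P)) := by
    intro q
    obtain ⟨x, hxt, hx⟩ := this q
    exact ⟨⟨x, hxt⟩, hx⟩
  exact Finite.of_surjective _ hsurj

end QMap

section Force
variable [TopologicalSpace G] [IsTopologicalGroup G] [TotallyDisconnectedSpace G]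

theorem C_isOpen (hα : Continuous α) (hUo : IsOpen (U : Set G)) (n : ℕ) :
    IsOpen ((C α U n : Subgroup G) : Set G) :=
  (iterHom_continuous α hα n).isOpen_preimage _ hUo

theorem C_isClosed (hα : Continuous α) (hUc : IsCompact (U : Set G))
    (hUo : IsOpen (U : Set G)) (n : ℕ) :
    IsClosed ((C α U n : Subgroup G) : Set G) :=
  IsClosed.preimage (iterHom_continuous α hα n) (U.isClosed_of_isOpen hUo)

theorem inf_U_isCompact (hα : Continuous α) (hUc : IsCompact (U : Set G))
    (hUo : IsOpen (U : Set G)) (n : ℕ) :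
    IsCompact ((C α U n ⊓ U : Subgroup G) : Set G) := by
  rw [Subgroup.coe_inf]
  exact hUc.inter_left (C_isClosed α U hα hUc hUo n)

theorem force (hα : Continuous α) (hUc : IsCompact (U : Set G)) (hUo : IsOpen (U : Set G))
    (n : ℕ)
    (hmul : (C α U (n+1)).relIndex U = (C α U 1).relIndex U * (C α U n).relIndex U) :
    (C α U (n+1) ⊓ U ≤ C α U 1) ∧
    (∀ u ∈ U, ∃ x ∈ C α U 1 ⊓ U, (α x)⁻¹ * u ∈ C α U n) := by
  classical
  set a1 := (C α U 1).relIndex U with ha1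
  set an := (C α U n).relIndex U with han
  set K1 := C α U 1 ⊓ U with hK1
  set K2 := C α U (n+1) ⊓ U with hK2
  set X := C α U (n+1) ⊓ C α U 1 with hX
  have h1 : ∀ x ∈ K1, α x ∈ U := by
    intro x hx
    exact (Subgroup.mem_inf.mp hx).1
  have h2 : ∀ x ∈ K1, (α x ∈ C α U n ↔ x ∈ C α U (n+1)) := by
    intro x _
    rw [mem_C, mem_C, iterHom_comm, ← iterHom_succ]
  haveI F0 : Finite (↥U ⧸ (C α U n).subgroupOf U) :=
    finite_quotient U (C α U n) hUc (C_isOpen α U hα hUo n)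
  haveI F1 : Finite (↥U ⧸ (C α U (n+1)).subgroupOf U) :=
    finite_quotient U (C α U (n+1)) hUc (C_isOpen α U hα hUo (n+1))
  haveI FU : Finite (↥U ⧸ (C α U 1).subgroupOf U) :=
    finite_quotient U (C α U 1) hUc (C_isOpen α U hα hUo 1)
  haveI F2 : Finite (↥K1 ⧸ (C α U (n+1)).subgroupOf K1) :=
    finite_quotient K1 (C α U (n+1)) (inf_U_isCompact α U hα hUc hUo 1)
      (C_isOpen α U hα hUo (n+1))
  haveI F3 : Finite (↥K2 ⧸ (X ⊓ U).subgroupOf K2) := by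
    refine finite_quotient K2 (X ⊓ U) (inf_U_isCompact α U hα hUc hUo (n+1)) ?_
    rw [Subgroup.coe_inf, hX, Subgroup.coe_inf]
    exact ((C_isOpen α U hα hUo (n+1)).inter (C_isOpen α U hα hUo 1)).inter hUo
  have a1pos : 0 < a1 := by
    rw [ha1, Subgroup.relIndex, Subgroup.index_eq_card]
    exact Nat.card_pos
  have anpos : 0 < an := by
    rw [han, Subgroup.relIndex, Subgroup.index_eq_card]
    exact Nat.card_pos
  set r := (C α U (n+1)).relIndex K1 with hr
  set s := (X ⊓ U).relIndex K2 with hs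
  -- chain A : r * a1 = X.relIndex U
  have hchainA : r * a1 = X.relIndex U := by
    have h := Subgroup.relIndex_mul_relIndex (C α U (n+1) ⊓ K1) K1 U inf_le_right inf_le_right
    rw [Subgroup.inf_relIndex_right] at h
    have e1 : K1.relIndex U = a1 := by
      rw [hK1, Subgroup.inf_relIndex_right, ha1]
    have e2 : C α U (n+1) ⊓ K1 = X ⊓ U := by rw [hK1, hX, inf_assoc]
    rw [e1, e2, Subgroup.inf_relIndex_right] at h
    exact h
  -- chain B : s * a(n+1) = X.relIndex U
  have hchainB : s * (C α U (n+1)).relIndex U = X.relIndex U := by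
    have h := Subgroup.relIndex_mul_relIndex (X ⊓ K2) K2 U inf_le_right inf_le_right
    have e0 : X ⊓ K2 = X ⊓ U := by
      rw [hK2, ← inf_assoc, inf_of_le_left (inf_le_left : X ≤ C α U (n+1))]
    have e1 : K2.relIndex U = (C α U (n+1)).relIndex U := by
      rw [hK2, Subgroup.inf_relIndex_right]
    rw [e0, e1, Subgroup.inf_relIndex_right] at h
    exact h
  have hrle : r ≤ an := by
    rw [hr, han]
    exact relindex_le_of_qmap α K1 U (C α U (n+1)) (C α U n) h1 h2
  have hXle : X.relIndex U ≤ a1 * an := by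
    rw [← hchainA, Nat.mul_comm]
    exact Nat.mul_le_mul_left a1 hrle
  have hspos : 0 < s := by
    rw [hs, Subgroup.relIndex, Subgroup.index_eq_card]
    exact Nat.card_pos
  have hs1 : s = 1 := by
    have h := hchainB
    rw [hmul] at h
    -- s * (a1 * an) = X.relIndex U ≤ a1 * an
    have hle : s * (a1 * an) ≤ 1 * (a1 * an) := by
      rw [Nat.one_mul, h]
      exact hXle
    have hsle : s ≤ 1 := Nat.le_of_mul_le_mul_right hle (Nat.mul_pos a1pos anpos)
    omega
  have hK2le : K2 ≤ X ⊓ U := Subgroup.relIndex_eq_one.mp hs1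
  constructor
  · exact fun x hx => ((inf_le_left.trans inf_le_right : X ⊓ U ≤ C α U 1)) (hK2le hx)
  · -- r = an, so the quotient map is surjective
    have hreq : r * a1 = an * a1 := by
      rw [hchainA, ← hchainB, hs1, Nat.one_mul, hmul, Nat.mul_comm]
    have hran : r = an := Nat.eq_of_mul_eq_mul_right a1pos hreq
    have hcard1 : Nat.card (↥K1 ⧸ (C α U (n+1)).subgroupOf K1) = r := by
      rw [hr, Subgroup.relIndex, Subgroup.index_eq_card]
    have hcard2 : Nat.card (↥U ⧸ (C α U n).subgroupOf U) = an := by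
      rw [han, Subgroup.relIndex, Subgroup.index_eq_card]
    have hsurj : Function.Surjective (qmap α K1 U (C α U (n+1)) (C α U n) h1 h2) := by
      apply surj_of_inj_card _ (qmap_injective α K1 U (C α U (n+1)) (C α U n) h1 h2)
      rw [hcard1, hcard2, hran]
    exact exists_of_qmap_surj α K1 U (C α U (n+1)) (C α U n) h1 h2 hsurj

end Force

section Build
variable [TopologicalSpace G] [IsTopologicalGroup G] [TotallyDisconnectedSpace G]

theorem chain_lemma (hi : ∀ n, 1 ≤ n → C α U n ⊓ U ≤ C α U 1) :
    ∀ n, ∀ x ∈ U, iterHom α n x ∈ U → ∀ k ≤ n, iterHom α k x ∈ U := by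
  intro n
  induction n with
  | zero =>
    intro x hxU _ k hk
    interval_cases k
    exact hxU
  | succ m ih =>
    intro x hxU hxn k hk
    have hx1 : α x ∈ U := by
      have hmem : x ∈ C α U (m+1) ⊓ U := Subgroup.mem_inf.mpr ⟨hxn, hxU⟩
      exact hi (m+1) (Nat.succ_le_succ (Nat.zero_le m)) hmem
    have hax : iterHom α m (α x) ∈ U := by
      rw [iterHom_comm, ← iterHom_succ]
      exact hxn
    cases k with
    | zero => exact hxU
    | succ j =>
      have := ih (α x) hx1 hax j (Nat.succ_le_succ_iff.mp hk)
      rwa [iterHom_comm, ← iterHom_succ] at this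

theorem exists_decomp
    (hi : ∀ n, 1 ≤ n → C α U n ⊓ U ≤ C α U 1)
    (hii : ∀ n, ∀ u ∈ U, ∃ x ∈ C α U 1 ⊓ U, (α x)⁻¹ * u ∈ C α U n) :
    ∀ m n, ∀ u ∈ U, ∃ s v, s ∈ seqU α U m ∧ v ∈ C α U n ⊓ U ∧ u = s * v := by
  intro m
  induction m with
  | zero =>
    intro n u hu
    exact ⟨u, 1, hu, Subgroup.mem_inf.mpr ⟨one_mem _, one_mem _⟩, (mul_one u).symm⟩
  | succ m ih =>
    intro n u hu
    obtain ⟨x, hxK, hv0⟩ := hii (n+1) u hu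
    have hxC1 : x ∈ C α U 1 := (Subgroup.mem_inf.mp hxK).1
    have hxU : x ∈ U := (Subgroup.mem_inf.mp hxK).2
    have haxU : α x ∈ U := hxC1
    set v0 := (α x)⁻¹ * u with hv0def
    have hv0U : v0 ∈ U := mul_mem (inv_mem haxU) hu
    have hueq : u = α x * v0 := by rw [hv0def, ← mul_assoc, mul_inv_cancel, one_mul]
    obtain ⟨s, v', hs, hv', hxeq⟩ := ih (n+1) x hxU
    have hv'C : v' ∈ C α U (n+1) := (Subgroup.mem_inf.mp hv').1
    have hv'U : v' ∈ U := (Subgroup.mem_inf.mp hv').2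
    have hav'U : α v' ∈ U :=
      chain_lemma α U hi (n+1) v' hv'U hv'C 1 (Nat.succ_le_succ (Nat.zero_le n))
    have hasU : α s ∈ U := by
      have : α s = α x * (α v')⁻¹ := by
        rw [hxeq, map_mul, mul_assoc, mul_inv_cancel, mul_one]
      rw [this]
      exact mul_mem haxU (inv_mem hav'U)
    refine ⟨α s, α v' * v0, ?_, ?_, ?_⟩
    · show α s ∈ U ⊓ Subgroup.map α (seqU α U m)
      exact Subgroup.mem_inf.mpr ⟨hasU, ⟨s, hs, rfl⟩⟩
    · refine Subgroup.mem_inf.mpr ⟨mul_mem ?_ ?_, mul_mem hav'U hv0U⟩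
      · show iterHom α n (α v') ∈ U
        rw [iterHom_comm, ← iterHom_succ]
        exact hv'C
      · -- v0 ∈ C n from v0 ∈ C (n+1) ⊓ U via chain
        exact chain_lemma α U hi (n+1) v0 hv0U hv0 n (Nat.le_succ n)
    · rw [hueq, hxeq, map_mul, mul_assoc]

theorem tidyAbove_of (hα : Continuous α) (hUc : IsCompact (U : Set G))
    (hUo : IsOpen (U : Set G))
    (hi : ∀ n, 1 ≤ n → C α U n ⊓ U ≤ C α U 1)
    (hii : ∀ n, ∀ u ∈ U, ∃ x ∈ C α U 1 ⊓ U, (α x)⁻¹ * u ∈ C α U n) :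
    (U : Set G) = (Uplus α U : Set G) * (Uminus α U : Set G) := by
  apply Set.Subset.antisymm
  · intro u hu
    set Kc : ℕ → Set (G × G) := fun s =>
      {p : G × G | p.1 ∈ seqU α U s ∧ p.2 ∈ C α U s ⊓ U ∧ p.1 * p.2 = u} with hKc
    have hdec : ∀ s, Kc (s+1) ⊆ Kc s := by
      intro s p hp
      refine ⟨seqU_antitone α U (Nat.le_succ s) hp.1, ?_, hp.2.2⟩
      have h2 := hp.2.1
      have h2U : p.2 ∈ U := (Subgroup.mem_inf.mp h2).2
      have h2C : p.2 ∈ C α U (s+1) := (Subgroup.mem_inf.mp h2).1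
      exact Subgroup.mem_inf.mpr
        ⟨chain_lemma α U hi (s+1) p.2 h2U h2C s (Nat.le_succ s), h2U⟩
    have hne : ∀ s, (Kc s).Nonempty := by
      intro s
      obtain ⟨a, b, ha, hb, hab⟩ := exists_decomp α U hi hii s s u hu
      exact ⟨(a, b), ha, hb, hab.symm⟩
    have hcl : ∀ s, IsClosed (Kc s) := by
      intro s
      apply IsClosed.inter
      · exact IsClosed.preimage continuous_fst ((seqU_isCompact α U hα hUc hUo s).isClosed)
      apply IsClosed.inter
      · apply IsClosed.preimage continuous_snd
        show IsClosed ((C α U s ⊓ U : Subgroup G) : Set G)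
        rw [Subgroup.coe_inf]
        exact (C_isClosed α U hα hUc hUo s).inter (U.isClosed_of_isOpen hUo)
      · exact isClosed_eq (continuous_fst.mul continuous_snd) continuous_const
    have hcompact : IsCompact (Kc 0) := by
      apply IsCompact.of_isClosed_subset (hUc.prod hUc) (hcl 0)
      rintro ⟨a, b⟩ ⟨ha, hb, -⟩
      exact ⟨seqU_le α U 0 ha, (Subgroup.mem_inf.mp hb).2⟩
    obtain ⟨⟨a, b⟩, hab⟩ := IsCompact.nonempty_iInter_of_sequence_nonempty_isCompact_isClosed
      Kc hdec hne hcompact hcl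
    simp only [Set.mem_iInter] at hab
    refine ⟨a, ?_, b, ?_, (hab 0).2.2⟩
    · exact (mem_Uplus α U).mpr fun s => (hab s).1
    · show b ∈ Uminus α U
      rw [mem_Uminus]
      intro s
      exact (Subgroup.mem_inf.mp (hab s).2.1).1
  · rintro x ⟨a, ha, b, hb, rfl⟩
    exact mul_mem (Uplus_le α U ha) (Uminus_le α U hb)

theorem Uminus_isClosed (hα : Continuous α) (hUc : IsCompact (U : Set G))
    (hUo : IsOpen (U : Set G)) : IsClosed ((Uminus α U : Subgroup G) : Set G) := by
  have : ((Uminus α U : Subgroup G) : Set G) = ⋂ n, (iterHom α n) ⁻¹' (U : Set G) := by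
    ext x
    simp [mem_Uminus]
  rw [this]
  exact isClosed_iInter fun n =>
    IsClosed.preimage (iterHom_continuous α hα n) (U.isClosed_of_isOpen hUo)

theorem tidyBelow_of (hα : Continuous α) (hUc : IsCompact (U : Set G))
    (hUo : IsOpen (U : Set G))
    (hi : ∀ n, 1 ≤ n → C α U n ⊓ U ≤ C α U 1) :
    IsClosed (Umm α U) := by
  have humm : ∀ x ∈ U, x ∈ Umm α U → x ∈ Uminus α U := by
    intro x hxU hx
    obtain ⟨N, hN⟩ := (mem_Umm α U).mp hx
    rw [mem_Uminus]
    intro m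
    rcases le_or_gt N m with h | h
    · exact Uminus_le α U (iterHom_mem_Uminus_of_le α U h hN)
    · exact chain_lemma α U hi N x hxU (Uminus_le α U hN) m h.le
  apply isClosed_of_closure_subset
  intro x hx
  have hxy : ∃ y ∈ Umm α U, y ∈ x • (U : Set G) := by
    have hopen : IsOpen (x • (U : Set G)) := hUo.smul x
    have hmem : x ∈ x • (U : Set G) := ⟨1, U.one_mem, by simp⟩
    obtain ⟨y, hy1, hy2⟩ := mem_closure_iff.mp hx _ hopen hmem
    exact ⟨y, hy2, hy1⟩
  obtain ⟨y, hyUmm, hyx⟩ := hxy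
  have hgU : y⁻¹ * x ∈ U := by
    obtain ⟨u, huU, hu⟩ := hyx
    have : y = x * u := hu.symm
    rw [this]
    simp [mul_assoc]
    simpa using inv_mem huU
  set g := y⁻¹ * x with hg
  have hgcl : g ∈ _root_.closure (Umm α U) := by
    rw [mem_closure_iff]
    intro O hO hgO
    have hopen : IsOpen (y • O) := hO.smul y
    have hxO : x ∈ y • O := by
      rw [Set.mem_smul_set_iff_inv_smul_mem]
      simpa [smul_eq_mul, ← hg] using hgO
    obtain ⟨w, hwO, hwUmm⟩ := mem_closure_iff.mp hx _ hopen hxO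
    have hw2 : y⁻¹ * w ∈ O := by
      have h9 := Set.mem_smul_set_iff_inv_smul_mem.mp hwO
      simpa [smul_eq_mul] using h9
    exact ⟨y⁻¹ * w, hw2, mul_mem_Umm α U (inv_mem_Umm α U hyUmm) hwUmm⟩
  have hgUminus : g ∈ Uminus α U := by
    have : g ∈ _root_.closure ((Uminus α U : Subgroup G) : Set G) := by
      rw [mem_closure_iff]
      intro O hO hgO
      obtain ⟨w, hwO, hwUmm⟩ := mem_closure_iff.mp hgcl (O ∩ (U : Set G))
        (hO.inter hUo) ⟨hgO, hgU⟩
      exact ⟨w, hwO.1, humm w hwO.2 hwUmm⟩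
    rwa [(Uminus_isClosed α U hα hUc hUo).closure_eq] at this
  have : x = y * g := by rw [hg, ← mul_assoc, mul_inv_cancel, one_mul]
  rw [this]
  exact mul_mem_Umm α U hyUmm (Uminus_subset_Umm α U hgUminus)

end Build

section Forward
variable [TopologicalSpace G] [IsTopologicalGroup G] [TotallyDisconnectedSpace G]

theorem relindex_C_Uplus (hTA : (U : Set G) = (Uplus α U : Set G) * (Uminus α U : Set G))
    (n : ℕ) :
    (C α U n).relIndex (Uplus α U) = (C α U n).relIndex U := by
  apply relindex_eq_of_qmap_bij (MonoidHom.id G) (Uplus α U) U (C α U n) (C α U n)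
    (fun x hx => Uplus_le α U hx) (fun x _ => Iff.rfl)
  intro u hu
  have : u ∈ (Uplus α U : Set G) * (Uminus α U : Set G) := by rw [← hTA]; exact hu
  obtain ⟨a, ha, b, hb, rfl⟩ := this
  refine ⟨a, ha, ?_⟩
  show (MonoidHom.id G a)⁻¹ * (a * b) ∈ C α U n
  simp only [MonoidHom.id_apply]
  rw [← mul_assoc, inv_mul_cancel, one_mul]
  exact Uminus_le_C α U n hb

theorem relindex_Uplus_succ (hα : Continuous α) (hUc : IsCompact (U : Set G))
    (hUo : IsOpen (U : Set G)) (n : ℕ)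
    (hkey : ∀ x ∈ Uplus α U, iterHom α (n+1) x ∈ U → α x ∈ U) :
    (C α U (n+1)).relIndex (Uplus α U)
      = (C α U n).relIndex (Uplus α U) * (C α U 1).relIndex (Uplus α U) := by
  set P := Uplus α U with hP
  set K1 := C α U 1 ⊓ P with hK1
  have h1 : ∀ x ∈ K1, α x ∈ P := by
    intro x hx
    have h2 := Subgroup.mem_inf.mp hx
    have h3 : α x ∈ U := h2.1
    exact apply_mem_Uplus α U hα hUc hUo h2.2 h3
  have h2 : ∀ x ∈ K1, (α x ∈ C α U n ↔ x ∈ C α U (n+1)) := fun x _ => by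
    rw [mem_C, mem_C, iterHom_comm, ← iterHom_succ]
  have h3 : ∀ y ∈ P, ∃ x ∈ K1, (α x)⁻¹ * y ∈ C α U n := by
    intro y hy
    obtain ⟨-, x, hxP, hax⟩ := (mem_Uplus_iff_exists α U hα hUc hUo).mp hy
    refine ⟨x, Subgroup.mem_inf.mpr ⟨?_, hxP⟩, ?_⟩
    · show iterHom α 1 x ∈ U
      rw [iterHom_one, hax]
      exact Uplus_le α U hy
    · rw [hax, inv_mul_cancel]
      exact one_mem _
  have hbij := relindex_eq_of_qmap_bij α K1 P (C α U (n+1)) (C α U n) h1 h2 h3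
  have hchain := Subgroup.relIndex_mul_relIndex (C α U (n+1) ⊓ K1) K1 P
    inf_le_right inf_le_right
  rw [Subgroup.inf_relIndex_right] at hchain
  have e1 : K1.relIndex P = (C α U 1).relIndex P := by
    rw [hK1, Subgroup.inf_relIndex_right]
  have e2 : (C α U (n+1) ⊓ K1).relIndex P = (C α U (n+1)).relIndex P := by
    have heq : C α U (n+1) ⊓ K1 = C α U (n+1) ⊓ P := by
      apply le_antisymm
      · exact inf_le_inf le_rfl inf_le_right
      · intro x hx
        have hx2 := Subgroup.mem_inf.mp hx
        have hx1 : x ∈ C α U 1 := by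
          show iterHom α 1 x ∈ U
          rw [iterHom_one]
          exact hkey x hx2.2 hx2.1
        exact Subgroup.mem_inf.mpr ⟨hx2.1, Subgroup.mem_inf.mpr ⟨hx1, hx2.2⟩⟩
    rw [heq, Subgroup.inf_relIndex_right]
  rw [e1, e2, hbij] at hchain
  exact hchain.symm

theorem key_of_tidyBelow (hα : Continuous α) (hUc : IsCompact (U : Set G))
    (hUo : IsOpen (U : Set G))
    (hTA : (U : Set G) = (Uplus α U : Set G) * (Uminus α U : Set G))
    (hTB : IsClosed (Umm α U)) (n : ℕ) (hn : 1 ≤ n) :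
    ∀ x ∈ Uplus α U, iterHom α n x ∈ U → α x ∈ U := by
  intro x hx hxn
  by_contra hax
  have hdU : iterHom α n x ∈ (Uplus α U : Set G) * (Uminus α U : Set G) := by
    rw [← hTA]; exact hxn
  obtain ⟨p, hp, q, hq, hpq⟩ := hdU
  choose y hy1 hy2 using fun k => exists_history α U hα hUc hUo (k + n) hp
  choose c hc1 hc2 using fun k => exists_history α U hα hUc hUo k hx
  set w : ℕ → G := fun k => (y k)⁻¹ * c k with hw
  have w1 : ∀ k j, j ≤ k → iterHom α j (w k) ∈ U := by
    intro k j hj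
    rw [hw]
    simp only [map_mul, map_inv]
    exact mul_mem (inv_mem (Uplus_le α U (hy2 k j (le_trans hj (Nat.le_add_right k n)))))
      (Uplus_le α U (hc2 k j hj))
  have w2 : ∀ k, iterHom α (k+1) (w k) ∉ U := by
    intro k hmem
    apply hax
    have e1 : iterHom α (k+1) (c k) = α x := by
      rw [show k+1 = 1+k from Nat.add_comm k 1, iterHom_add, hc1, iterHom_one]
    have e2 : iterHom α (k+1) (w k) = (iterHom α (k+1) (y k))⁻¹ * α x := by
      rw [hw]
      simp only [map_mul, map_inv]
      rw [e1]
    have hyU : iterHom α (k+1) (y k) ∈ U :=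
      Uplus_le α U (hy2 k (k+1) (by omega))
    have e3 : α x = iterHom α (k+1) (y k) * iterHom α (k+1) (w k) := by
      rw [e2, ← mul_assoc, mul_inv_cancel, one_mul]
    rw [e3]
    exact mul_mem hyU hmem
  have w3 : ∀ k, iterHom α (k+n) (w k) ∈ Uminus α U := by
    intro k
    have e1 : iterHom α (k+n) (c k) = iterHom α n x := by
      rw [show k+n = n+k from Nat.add_comm k n, iterHom_add, hc1]
    have e2 : iterHom α (k+n) (w k) = p⁻¹ * (p * q) := by
      rw [hw]
      simp only [map_mul, map_inv]
      rw [e1, hy1, ← hpq]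
    rw [e2, ← mul_assoc, inv_mul_cancel, one_mul]
    exact hq
  set K : ℕ → ℕ := fun s => s * (n+1) with hK
  have hKsucc : ∀ s, K (s+1) = K s + (n+1) := by
    intro s
    simp [hK, Nat.succ_mul]
  set z : ℕ → G := fun s => Nat.rec (w 0) (fun s zs => zs * w (K (s+1))) s with hz
  have hz0 : z 0 = w 0 := rfl
  have hzsucc : ∀ s, z (s+1) = z s * w (K (s+1)) := fun s => rfl
  have hK0 : K 0 = 0 := by simp [hK]
  have z1 : ∀ s m, K s + n ≤ m → iterHom α m (z s) ∈ Uminus α U := by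
    intro s
    induction s with
    | zero =>
      intro m hm
      rw [hz0]
      refine iterHom_mem_Uminus_of_le α U (show 0 + n ≤ m by omega) (w3 0)
    | succ s ih =>
      intro m hm
      rw [hzsucc, map_mul]
      have hKs : K s + n ≤ m := by
        have := hKsucc s
        omega
      refine mul_mem (ih m hKs) (iterHom_mem_Uminus_of_le α U hm (w3 (K (s+1))))
  have zU : ∀ s, z s ∈ U := by
    intro s
    induction s with
    | zero => rw [hz0]; exact w1 0 0 le_rfl
    | succ s ih => rw [hzsucc]; exact mul_mem ih (w1 (K (s+1)) 0 (Nat.zero_le _))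
  have zUmm : ∀ s, z s ∈ Umm α U := fun s => (mem_Umm α U).mpr ⟨K s + n, z1 s _ le_rfl⟩
  have z2 : ∀ s t, t ≤ s → iterHom α (K t + 1) (z s) ∉ U := by
    intro s
    induction s with
    | zero =>
      intro t ht hmem
      have ht0 : t = 0 := Nat.le_zero.mp ht
      subst ht0
      rw [hz0] at hmem
      apply w2 0
      have : K 0 + 1 = 0 + 1 := by rw [hK0]
      rw [this] at hmem
      exact hmem
    | succ s ih =>
      intro t ht hmem
      rw [hzsucc, map_mul] at hmem
      rcases Nat.lt_or_ge t (s+1) with h | h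
      · have hsecond : iterHom α (K t + 1) (w (K (s+1))) ∈ U := by
          apply w1
          have h1 : K (t+1) ≤ K (s+1) := Nat.mul_le_mul_right _ (Nat.succ_le_of_lt h)
          have h2 := hKsucc t
          omega
        refine ih t (Nat.lt_succ_iff.mp h) ?_
        have e : iterHom α (K t + 1) (z s)
            = (iterHom α (K t+1) (z s) * iterHom α (K t+1) (w (K (s+1))))
              * (iterHom α (K t+1) (w (K (s+1))))⁻¹ := by
          rw [mul_assoc, mul_inv_cancel, mul_one]
        rw [e]
        exact mul_mem hmem (inv_mem hsecond)
      · have ht1 : t = s+1 := le_antisymm ht h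
        subst ht1
        have hfirst : iterHom α (K (s+1) + 1) (z s) ∈ U := by
          apply Uminus_le α U
          apply z1 s
          have := hKsucc s
          omega
        apply w2 (K (s+1))
        have e : iterHom α (K (s+1)+1) (w (K (s+1)))
            = (iterHom α (K (s+1)+1) (z s))⁻¹
              * (iterHom α (K (s+1)+1) (z s) * iterHom α (K (s+1)+1) (w (K (s+1)))) := by
          rw [← mul_assoc, inv_mul_cancel, one_mul]
        rw [e]
        exact mul_mem (inv_mem hfirst) hmem
  haveI : (Filter.map z Filter.atTop).NeBot := Filter.map_neBot
  have hFle : Filter.map z Filter.atTop ≤ Filter.principal (U : Set G) := by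
    rw [Filter.le_principal_iff, Filter.mem_map]
    exact Filter.Eventually.of_forall zU
  obtain ⟨zl, hzlU, hcl⟩ := hUc.exists_clusterPt hFle
  have hzlUmm : zl ∈ Umm α U := by
    have h1 : zl ∈ _root_.closure (Umm α U) := by
      rw [mem_closure_iff_clusterPt]
      refine hcl.mono ?_
      rw [Filter.le_principal_iff, Filter.mem_map]
      exact Filter.Eventually.of_forall zUmm
    rwa [hTB.closure_eq] at h1
  obtain ⟨N, hN⟩ := (mem_Umm α U).mp hzlUmm
  set j := K N + 1 with hj
  have hjN : N ≤ j := by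
    have h1 : N ≤ K N := by
      calc N = N * 1 := (Nat.mul_one N).symm
        _ ≤ N * (n+1) := Nat.mul_le_mul_left N (by omega)
    omega
  have hgood : iterHom α j zl ∈ U := Uminus_le α U (iterHom_mem_Uminus_of_le α U hjN hN)
  have hbad : iterHom α j zl ∉ U := by
    intro hmem
    have hcl2 : ClusterPt (iterHom α j zl)
        (Filter.map (fun s => iterHom α j (z s)) Filter.atTop) := by
      have hmcp : MapClusterPt zl Filter.atTop z := hcl
      have h1 := hmcp.continuousAt_comp (iterHom_continuous α hα j).continuousAt
      exact h1
    have hle2 : Filter.map (fun s => iterHom α j (z s)) Filter.atTop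
        ≤ Filter.principal ((U : Set G)ᶜ) := by
      rw [Filter.le_principal_iff, Filter.mem_map]
      filter_upwards [Filter.eventually_ge_atTop N] with s hs
      exact z2 s N hs
    have h2 : iterHom α j zl ∈ _root_.closure ((U : Set G)ᶜ) := by
      rw [mem_closure_iff_clusterPt]
      exact hcl2.mono hle2
    rw [IsClosed.closure_eq (isClosed_compl_iff.mpr hUo)] at h2
    exact h2 hmem
  exact hbad hgood

end Forward

theorem C_eq (n : ℕ) : C α U n = Subgroup.comap (iterHom α n) U := rfl

end TidyAux

open TidyAux

/-- `U` is tidy for `α` iff `[U : U ∩ α^{-n}(U)] = [U : U ∩ α⁻¹(U)]ⁿ` for all `n ≥ 1`. -/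
theorem tidy_iff_index_pow [Group G] [TopologicalSpace G] [IsTopologicalGroup G]
    [TotallyDisconnectedSpace G] [LocallyCompactSpace G]
    (α : G →* G) (hα : Continuous α)
    (U : Subgroup G) (hUc : IsCompact (U : Set G)) (hUo : IsOpen (U : Set G)) :
    Tidy α U ↔
      ∀ n : ℕ, 1 ≤ n →
        Subgroup.relIndex (Subgroup.comap (iterHom α n) U) U
          = Subgroup.relIndex (Subgroup.comap α U) U ^ n := by
  have hC1 : C α U 1 = Subgroup.comap α U := C_one α U
  constructor
  · rintro ⟨hta, htb⟩ n hn
    have hTA : (U : Set G) = (Uplus α U : Set G) * (Uminus α U : Set G) := hta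
    have hTB : IsClosed (Umm α U) := htb
    have hrec : ∀ m, 1 ≤ m → (C α U m).relIndex (Uplus α U)
        = ((C α U 1).relIndex (Uplus α U)) ^ m := by
      intro m hm
      induction m, hm using Nat.le_induction with
      | base => rw [pow_one]
      | succ m hm ih =>
        have hkey := key_of_tidyBelow α U hα hUc hUo hTA hTB (m+1) (by omega)
        rw [relindex_Uplus_succ α U hα hUc hUo m hkey, ih, pow_succ]
    calc (Subgroup.comap (iterHom α n) U).relIndex U
        = (C α U n).relIndex U := by rw [C_eq]
      _ = (C α U n).relIndex (Uplus α U) := (relindex_C_Uplus α U hTA n).symm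
      _ = ((C α U 1).relIndex (Uplus α U)) ^ n := hrec n hn
      _ = ((C α U 1).relIndex U) ^ n := by rw [relindex_C_Uplus α U hTA 1]
      _ = (Subgroup.relIndex (Subgroup.comap α U) U) ^ n := by rw [hC1]
  · intro hmul
    have ha0 : (C α U 0).relIndex U = 1 := by
      rw [C_zero]
      exact Subgroup.relIndex_self U
    have hmul' : ∀ n, (C α U (n+1)).relIndex U
        = (C α U 1).relIndex U * (C α U n).relIndex U := by
      intro n
      cases n with
      | zero => rw [ha0, mul_one]
      | succ k =>
        have h1 := hmul (k+2) (by omega)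
        have h2 := hmul (k+1) (by omega)
        rw [← hC1] at h1 h2
        rw [← C_eq] at h1 h2
        rw [h1, h2]
        ring
    have hforce := fun n => force α U hα hUc hUo n (hmul' n)
    have hi : ∀ n, 1 ≤ n → C α U n ⊓ U ≤ C α U 1 := by
      intro n hn
      obtain ⟨m, rfl⟩ : ∃ m, n = m+1 := ⟨n-1, by omega⟩
      exact (hforce m).1
    have hii : ∀ n, ∀ u ∈ U, ∃ x ∈ C α U 1 ⊓ U, (α x)⁻¹ * u ∈ C α U n :=
      fun n => (hforce n).2
    exact ⟨tidyAbove_of α U hα hUc hUo hi hii, tidyBelow_of α U hα hUc hUo hi⟩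
end
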